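/- arXiv:1512.06444 — 11 statements merged into one kernel-verified Lean document; each statement's English description precedes it below -/
import Mathlib

section
/- For every 0 < h ≤ √(3/(4k)), the chromatic number of the space ℝ × [0,h]^k with forbidden Euclidean distance 1 is at most 3; that is, there exists a coloring c : ℝ × [0,h]^k → Fin 3 such that no two points at Euclidean distance exactly 1 receive the same color. -/
/-- For every `0 < h ≤ √(3/(4k))`, the space `ℝ × [0,h]^k` (modeled as the set of points
`p` in Euclidean `(k+1)`-space whose coordinates other than the 0-th lie in `[0,h]`)
admits a coloring in 3 colors with no monochromatic pair at Euclidean distance 1. -/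
theorem stmt0 (k : ℕ) (h : ℝ) (hpos : 0 < h) (hle : h ≤ Real.sqrt (3 / (4 * k))) :
    ∃ c : {p : EuclideanSpace ℝ (Fin (k + 1)) // ∀ i, i ≠ 0 → p i ∈ Set.Icc 0 h} → Fin 3,
      ∀ x y : {p : EuclideanSpace ℝ (Fin (k + 1)) // ∀ i, i ≠ 0 → p i ∈ Set.Icc 0 h}, dist (x : EuclideanSpace ℝ (Fin (k + 1))) (y : EuclideanSpace ℝ (Fin (k + 1))) = 1 →
        c x ≠ c y := by
  classical
  rcases Nat.eq_zero_or_pos k with hk | hk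
  · subst hk
    norm_num at hle
    linarith
  refine ⟨fun p => ⟨(⌊2 * (p : EuclideanSpace ℝ (Fin (k + 1))) 0⌋ % 3).toNat, by omega⟩, ?_⟩
  intro x y hd hc
  set a := (x : EuclideanSpace ℝ (Fin (k + 1))) 0 with ha
  set b := (y : EuclideanSpace ℝ (Fin (k + 1))) 0 with hb
  -- the sum of squared coordinate differences is 1
  have hsum : ∑ i, ((x : EuclideanSpace ℝ (Fin (k + 1))) i
      - (y : EuclideanSpace ℝ (Fin (k + 1))) i) ^ 2 = 1 := by
    have h1 : Real.sqrt (∑ i, dist ((x : EuclideanSpace ℝ (Fin (k + 1))) i)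
        ((y : EuclideanSpace ℝ (Fin (k + 1))) i) ^ 2) = 1 := by
      rw [← EuclideanSpace.dist_eq]; exact hd
    rw [Real.sqrt_eq_one] at h1
    simpa [Real.dist_eq, sq_abs] using h1
  have hsplit : (a - b) ^ 2 + ∑ i : Fin k, ((x : EuclideanSpace ℝ (Fin (k + 1))) i.succ
      - (y : EuclideanSpace ℝ (Fin (k + 1))) i.succ) ^ 2 = 1 := by
    rw [← hsum, Fin.sum_univ_succ]
  have htail0 : 0 ≤ ∑ i : Fin k, ((x : EuclideanSpace ℝ (Fin (k + 1))) i.succ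
      - (y : EuclideanSpace ℝ (Fin (k + 1))) i.succ) ^ 2 :=
    Finset.sum_nonneg fun i _ => sq_nonneg _
  have hk' : (k : ℝ) ≠ 0 := by positivity
  have hkpos : (0 : ℝ) < k := by positivity
  have hh2 : h ^ 2 ≤ 3 / (4 * k) := by
    have h0 : (0 : ℝ) ≤ 3 / (4 * k) := by positivity
    nlinarith [Real.sq_sqrt h0, Real.sqrt_nonneg (3 / (4 * (k : ℝ)))]
  have htail : ∑ i : Fin k, ((x : EuclideanSpace ℝ (Fin (k + 1))) i.succ
      - (y : EuclideanSpace ℝ (Fin (k + 1))) i.succ) ^ 2 ≤ 3 / 4 := by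
    have hbound : ∀ i : Fin k, i ∈ Finset.univ → ((x : EuclideanSpace ℝ (Fin (k + 1))) i.succ
        - (y : EuclideanSpace ℝ (Fin (k + 1))) i.succ) ^ 2 ≤ h ^ 2 := by
      intro i _
      obtain ⟨hx1, hx2⟩ := x.2 i.succ (Fin.succ_ne_zero i)
      obtain ⟨hy1, hy2⟩ := y.2 i.succ (Fin.succ_ne_zero i)
      nlinarith
    calc ∑ i : Fin k, ((x : EuclideanSpace ℝ (Fin (k + 1))) i.succ
        - (y : EuclideanSpace ℝ (Fin (k + 1))) i.succ) ^ 2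
        ≤ ∑ _i : Fin k, h ^ 2 := Finset.sum_le_sum hbound
      _ = (k : ℝ) * h ^ 2 := by simp
      _ ≤ (k : ℝ) * (3 / (4 * k)) := by nlinarith
      _ = 3 / 4 := by field_simp
  have hsq : 1 / 4 ≤ (a - b) ^ 2 := by linarith
  have hsq' : (a - b) ^ 2 ≤ 1 := by linarith
  have habs1 : 1 / 2 ≤ |a - b| := by
    nlinarith [abs_nonneg (a - b), sq_abs (a - b)]
  have habs2 : |a - b| ≤ 1 := by
    nlinarith [abs_nonneg (a - b), sq_abs (a - b)]
  obtain ⟨hab1, hab2⟩ := abs_le.mp habs2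
  -- colors are equal
  simp only [Fin.mk.injEq] at hc
  have hmod : ⌊2 * a⌋ % 3 = ⌊2 * b⌋ % 3 := by
    rw [ha, hb]; omega
  have h3 : (3 : ℤ) ∣ (⌊2 * a⌋ - ⌊2 * b⌋) := by omega
  have hf1 := Int.floor_le (2 * a)
  have hf2 := Int.lt_floor_add_one (2 * a)
  have hf3 := Int.floor_le (2 * b)
  have hf4 := Int.lt_floor_add_one (2 * b)
  have hlo : ((⌊2 * a⌋ - ⌊2 * b⌋ : ℤ) : ℝ) - 1 < 2 * a - 2 * b := by push_cast; linarith
  have hhi : 2 * a - 2 * b < ((⌊2 * a⌋ - ⌊2 * b⌋ : ℤ) : ℝ) + 1 := by push_cast; linarith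
  have hdlt : ((⌊2 * a⌋ - ⌊2 * b⌋ : ℤ) : ℝ) < 3 := by linarith
  have hdgt : (-3 : ℝ) < ((⌊2 * a⌋ - ⌊2 * b⌋ : ℤ) : ℝ) := by linarith
  have hdlt' : (⌊2 * a⌋ - ⌊2 * b⌋ : ℤ) < 3 := by exact_mod_cast hdlt
  have hdgt' : (-3 : ℤ) < (⌊2 * a⌋ - ⌊2 * b⌋ : ℤ) := by exact_mod_cast hdgt
  have hd0 : (⌊2 * a⌋ - ⌊2 * b⌋ : ℤ) = 0 := by omega
  rw [hd0] at hlo hhi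
  push_cast at hlo hhi
  rcases le_abs.mp habs1 with h' | h' <;> linarith
end

section
/- For every ε > 0, any proper coloring of the strip ℝ × [0,ε] ⊆ ℝ² (with forbidden Euclidean distance 1) requires at least 3 colors; i.e., there is no map c : ℝ × [0,ε] → Fin 2 with c(x) ≠ c(y) whenever dist(x,y) = 1. -/
private def pt (a b : ℝ) : EuclideanSpace ℝ (Fin 2) := WithLp.toLp 2 ![a, b]

private lemma pt_snd (a b : ℝ) : pt a b 1 = b := rfl

private lemma pt_dist (a b a' b' : ℝ) :
    dist (pt a b) (pt a' b') = Real.sqrt ((a - a')^2 + (b - b')^2) := by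
  rw [EuclideanSpace.dist_eq]
  simp [pt, Fin.sum_univ_two, Real.dist_eq, sq_abs]

private lemma fin2_eq : ∀ {x y z : Fin 2}, x ≠ y → z ≠ y → x = z := by decide

/-- For every `ε > 0`, the strip `ℝ × [0, ε] ⊆ ℝ²` admits no proper 2-coloring with
forbidden Euclidean distance 1: every 2-coloring has a monochromatic pair at distance 1. -/
theorem stmt1 (ε : ℝ) (hε : 0 < ε) :
    ∀ c : {p : EuclideanSpace ℝ (Fin 2) // p 1 ∈ Set.Icc 0 ε} → Fin 2,
      ∃ x y : {p : EuclideanSpace ℝ (Fin 2) // p 1 ∈ Set.Icc 0 ε}, dist (x : EuclideanSpace ℝ (Fin 2)) (y : EuclideanSpace ℝ (Fin 2)) = 1 ∧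
        c x = c y := by
  intro c
  by_contra hcon
  push_neg at hcon
  -- hcon : ∀ x y, dist ↑x ↑y = 1 → c x ≠ c y
  set k : ℕ := max 1 ⌈ε⁻¹ ^ 2⌉₊ with hkdef
  have hk1 : (1:ℝ) ≤ (k:ℝ) := by
    have : 1 ≤ k := le_max_left _ _
    exact_mod_cast this
  have hk0 : (0:ℝ) < (k:ℝ) := lt_of_lt_of_le one_pos hk1
  have hkε : 1 / (k:ℝ) ≤ ε ^ 2 := by
    have h1 : ε⁻¹ ^ 2 ≤ (⌈ε⁻¹ ^ 2⌉₊ : ℝ) := Nat.le_ceil _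
    have h2 : (⌈ε⁻¹ ^ 2⌉₊ : ℝ) ≤ (k:ℝ) := by
      have : ⌈ε⁻¹ ^ 2⌉₊ ≤ k := le_max_right _ _
      exact_mod_cast this
    have h3 : ε⁻¹ ^ 2 ≤ (k:ℝ) := h1.trans h2
    rw [div_le_iff₀ hk0]
    have hinv : ε⁻¹ ^ 2 * ε ^ 2 = 1 := by
      field_simp
    nlinarith [sq_nonneg ε, hε]
  set s : ℝ := 1 - 1 / (2 * k) with hsdef
  have hs0 : 0 < s := by
    have : 1 / (2 * (k:ℝ)) ≤ 1 / 2 := by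
      apply div_le_div_of_nonneg_left <;> nlinarith
    simp only [hsdef]; linarith
  have hs1 : s ≤ 1 := by
    have : 0 < 1 / (2 * (k:ℝ)) := by positivity
    simp only [hsdef]; linarith
  set δ : ℝ := Real.sqrt (1 - s ^ 2) with hδdef
  have hδ0 : 0 ≤ δ := Real.sqrt_nonneg _
  have hδ2 : δ ^ 2 = 1 - s ^ 2 := Real.sq_sqrt (by nlinarith)
  have hδε : δ ≤ ε := by
    have hsq : δ ^ 2 ≤ ε ^ 2 := by
      rw [hδ2]
      have : 1 - s ^ 2 ≤ 1 / (k:ℝ) := by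
        have hexp : 1 - s ^ 2 = (1 / (2*k)) * (2 - 1/(2*k)) := by ring
        have ht0 : (0:ℝ) ≤ 1 / (2 * (k:ℝ)) := by positivity
        have h2t : 2 * (1 / (2 * (k:ℝ))) = 1 / (k:ℝ) := by field_simp
        rw [hexp]; nlinarith
      exact this.trans hkε
    nlinarith
  -- the coloring along the line y = 0
  have mem0 : ∀ a : ℝ, (pt a 0) 1 ∈ Set.Icc 0 ε := by
    intro a; rw [pt_snd]; exact ⟨le_refl 0, hε.le⟩
  set f : ℝ → Fin 2 := fun a => c ⟨pt a 0, mem0 a⟩ with hfdef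
  have hA : ∀ a : ℝ, f (a + 1) ≠ f a := by
    intro a
    apply hcon
    rw [pt_dist]
    norm_num
  have hp2 : ∀ a : ℝ, f (a + 2) = f a := by
    intro a
    have h1 : f (a + 2) ≠ f (a + 1) := by
      have := hA (a + 1); rwa [show a + 1 + 1 = a + 2 by ring] at this
    exact fin2_eq h1 (hA a).symm
  have hps : ∀ a : ℝ, f (a + 2 * s) = f a := by
    intro a
    have hmem : (pt (a + s) δ) 1 ∈ Set.Icc 0 ε := by
      rw [pt_snd]; exact ⟨hδ0, hδε⟩
    have hd1 : dist (pt (a + 2 * s) 0) (pt (a + s) δ) = 1 := by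
      rw [pt_dist]
      rw [show (a + 2*s - (a + s))^2 + (0 - δ)^2 = s^2 + δ^2 by ring, hδ2]
      norm_num
    have hd2 : dist (pt a 0) (pt (a + s) δ) = 1 := by
      rw [pt_dist]
      rw [show (a - (a + s))^2 + (0 - δ)^2 = s^2 + δ^2 by ring, hδ2]
      norm_num
    exact fin2_eq (hcon _ ⟨pt (a+s) δ, hmem⟩ hd1) (hcon _ ⟨pt (a+s) δ, hmem⟩ hd2)
  have hpk : ∀ a : ℝ, f (a + 1 / (k:ℝ)) = f a := by
    intro a
    have h1 : f (a + (2 - 2 * s) + 2 * s) = f (a + (2 - 2 * s)) := hps _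
    rw [show a + (2 - 2*s) + 2*s = a + 2 by ring] at h1
    rw [show 1 / (k:ℝ) = 2 - 2 * s by simp only [hsdef]; field_simp; ring]
    rw [← hp2 a, h1]
  have hiter : ∀ n : ℕ, f ((n : ℝ) / (k:ℝ)) = f 0 := by
    intro n
    induction n with
    | zero => norm_num
    | succ m ih =>
      have := hpk ((m : ℝ) / (k:ℝ))
      rw [ih] at this
      rw [← this]
      congr 1
      push_cast
      ring
  have hfinal := hiter k
  rw [div_self (ne_of_gt hk0)] at hfinal
  exact hA 0 (by rw [zero_add, hfinal])
end

section
/- For √(3/(4k)) < h ≤ √(8/(9k)), there exists a proper coloring of ℝ × [0,h]^k in 4 colors with forbidden distance 1: color each point according to ⌊3x⌋ mod 4 where x is its first coordinate (using half-open intervals of length 1/3), and verify that no two points at Euclidean distance 1 share a color. -/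
/-- For `√(3/(4k)) < h ≤ √(8/(9k))`, the coloring of `ℝ × [0,h]^k` assigning to a point
with first coordinate `x` the color `⌊3x⌋ mod 4` is a proper coloring with forbidden
Euclidean distance 1: two points of the slab receiving the same color are not at distance 1. -/
theorem stmt2 (k : ℕ) (h : ℝ) (hlt : Real.sqrt (3 / (4 * k)) < h)
    (hle : h ≤ Real.sqrt (8 / (9 * k)))
    (x y : EuclideanSpace ℝ (Fin (k + 1)))
    (hx : ∀ i, i ≠ 0 → x i ∈ Set.Icc 0 h) (hy : ∀ i, i ≠ 0 → y i ∈ Set.Icc 0 h)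
    (hc : (⌊3 * x 0⌋ : ℤ) % 4 = (⌊3 * y 0⌋ : ℤ) % 4) :
    dist x y ≠ 1 := by
  rcases Nat.eq_zero_or_pos k with hk | hk
  · subst hk
    simp at hlt hle
    linarith
  have hk' : (0 : ℝ) < k := by exact_mod_cast hk
  have hpos : (0 : ℝ) ≤ Real.sqrt (3 / (4 * k)) := Real.sqrt_nonneg _
  have hh0 : (0 : ℝ) ≤ h := le_of_lt (lt_of_le_of_lt hpos hlt)
  have hh2 : h ^ 2 ≤ 8 / (9 * k) := by
    nlinarith [Real.sq_sqrt (show (0:ℝ) ≤ 8 / (9 * k) by positivity),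
      Real.sqrt_nonneg (8 / (9 * (k:ℝ)))]
  intro hd
  have hsum : ∑ i, (x i - y i) ^ 2 = 1 := by
    have h2 : Real.sqrt (∑ i, (x i - y i) ^ 2) = 1 := by
      rw [← hd, EuclideanSpace.dist_eq]
      simp [Real.dist_eq, sq_abs]
    have hnn : 0 ≤ ∑ i, (x i - y i) ^ 2 :=
      Finset.sum_nonneg fun i _ => sq_nonneg _
    nlinarith [Real.sq_sqrt hnn, h2]
  set m := (⌊3 * x 0⌋ : ℤ)
  set n := (⌊3 * y 0⌋ : ℤ)
  have hdvd : (4 : ℤ) ∣ m - n := Int.ModEq.dvd hc.symm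
  have hfx1 : (m : ℝ) ≤ 3 * x 0 := Int.floor_le _
  have hfx2 : 3 * x 0 < m + 1 := Int.lt_floor_add_one _
  have hfy1 : (n : ℝ) ≤ 3 * y 0 := Int.floor_le _
  have hfy2 : 3 * y 0 < n + 1 := Int.lt_floor_add_one _
  have hlow : (x 0 - y 0) ^ 2 ≤ ∑ i, (x i - y i) ^ 2 := by
    have := Finset.single_le_sum (f := fun i => (x i - y i) ^ 2)
      (fun i _ => sq_nonneg _) (Finset.mem_univ (0 : Fin (k + 1)))
    simpa using this
  rcases eq_or_ne m n with hmn | hmn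
  · -- same interval: |x0 - y0| < 1/3 and other coords contribute ≤ 8/9
    have h03 : (x 0 - y 0) ^ 2 < 1 / 9 := by
      rw [hmn] at hfx1 hfx2
      nlinarith
    have hrest : ∑ i : Fin k, (x i.succ - y i.succ) ^ 2 ≤ k * h ^ 2 := by
      have : ∀ i : Fin k, (x i.succ - y i.succ) ^ 2 ≤ h ^ 2 := by
        intro i
        have hxi := hx i.succ (Fin.succ_ne_zero i)
        have hyi := hy i.succ (Fin.succ_ne_zero i)
        rcases hxi with ⟨hx1, hx2⟩
        rcases hyi with ⟨hy1, hy2⟩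
        nlinarith
      calc ∑ i : Fin k, (x i.succ - y i.succ) ^ 2
          ≤ ∑ _i : Fin k, h ^ 2 := Finset.sum_le_sum fun i _ => this i
        _ = k * h ^ 2 := by simp [mul_comm]
    have hsplit : ∑ i, (x i - y i) ^ 2
        = (x 0 - y 0) ^ 2 + ∑ i : Fin k, (x i.succ - y i.succ) ^ 2 :=
      Fin.sum_univ_succ _
    have hkh : (k : ℝ) * h ^ 2 ≤ 8 / 9 := by
      have h1 : (k : ℝ) * h ^ 2 ≤ (k : ℝ) * (8 / (9 * k)) :=
        mul_le_mul_of_nonneg_left hh2 (le_of_lt hk')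
      have h2 : (k : ℝ) * (8 / (9 * k)) = 8 / 9 := by
        field_simp
      linarith
    linarith [hsplit, hsum]
  · -- floors differ by at least 4
    have h4 : 4 ≤ |m - n| := by
      refine Int.le_of_dvd ?_ ((dvd_abs 4 (m - n)).mpr hdvd)
      simpa [abs_pos, sub_ne_zero] using hmn
    have : (x 0 - y 0) ^ 2 > 1 := by
      rcases le_or_gt (m - n) 0 with hle' | hlt'
      · have : m - n ≤ -4 := by
          rcases abs_cases (m - n) with ⟨h1, _⟩ | ⟨h1, _⟩
          · omega
          · omega
        have hmn' : (m : ℝ) + 4 ≤ (n : ℝ) := by exact_mod_cast (by omega : m + 4 ≤ n)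
        nlinarith
      · have : 4 ≤ m - n := by
          rcases abs_cases (m - n) with ⟨h1, _⟩ | ⟨h1, _⟩
          · omega
          · omega
        have hmn' : (n : ℝ) + 4 ≤ (m : ℝ) := by exact_mod_cast (by omega : n + 4 ≤ m)
        nlinarith
    linarith
end

section
/- The set of forbidden radii is dense in [1/2, ∞): for every r₀ ≥ 1/2 and every δ > 0 there exists r with |r − r₀| < δ such that the unit-distance graph on the circle of radius r contains an odd cycle. Specifically, for any rational q = l/(2k+1) ∈ (0, 1/2) with k, l ∈ ℕ, the radius r = 1/(2 sin(πq)) is forbidden. -/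
/-- A radius `r` is *forbidden* if the unit-distance graph on the circle of radius `r`
(centered at the origin of the Euclidean plane) contains an odd cycle, i.e. an odd closed
walk along unit-distance chords. -/
def ForbiddenRadius (r : ℝ) : Prop :=
  ∃ n : ℕ, Odd n ∧ ∃ f : ℕ → EuclideanSpace ℝ (Fin 2),
    (∀ i, ‖f i‖ = r) ∧ (∀ i < n, dist (f i) (f (i + 1)) = 1) ∧ f n = f 0

private lemma key (k l : ℕ) (hl : 0 < l) (hq : (l : ℝ) / (2 * k + 1) < 1 / 2) :
    ForbiddenRadius (1 / (2 * Real.sin (Real.pi * ((l : ℝ) / (2 * k + 1))))) := by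
  set q : ℝ := (l : ℝ) / (2 * k + 1) with hqdef
  have hden : (0:ℝ) < 2 * k + 1 := by positivity
  have hl' : (0:ℝ) < l := by exact_mod_cast hl
  have hq0 : 0 < q := by positivity
  have hs : 0 < Real.sin (Real.pi * q) := by
    apply Real.sin_pos_of_pos_of_lt_pi
    · positivity
    · nlinarith [Real.pi_pos]
  set s := Real.sin (Real.pi * q) with hsdef
  set r : ℝ := 1 / (2 * s) with hrdef
  have hr : 0 < r := by positivity
  refine ⟨2 * k + 1, ⟨k, by ring⟩,
    fun i => WithLp.toLp 2 ![r * Real.cos (2 * Real.pi * q * i), r * Real.sin (2 * Real.pi * q * i)],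
    ?_, ?_, ?_⟩
  · intro i
    have hpyth := Real.sin_sq_add_cos_sq (2 * Real.pi * q * i)
    rw [EuclideanSpace.norm_eq]
    simp only [PiLp.toLp_apply, Fin.sum_univ_two, Matrix.cons_val_zero, Matrix.cons_val_one, Matrix.head_cons,
      Real.norm_eq_abs, sq_abs]
    rw [show (r * Real.cos (2 * Real.pi * q * i)) ^ 2 + (r * Real.sin (2 * Real.pi * q * i)) ^ 2
        = r ^ 2 by nlinarith]
    exact Real.sqrt_sq hr.le
  · intro i _
    rw [EuclideanSpace.dist_eq]
    simp only [PiLp.toLp_apply, Fin.sum_univ_two, Matrix.cons_val_zero, Matrix.cons_val_one, Matrix.head_cons,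
      Real.dist_eq, sq_abs]
    have hab : 2 * Real.pi * q * (i:ℝ) - 2 * Real.pi * q * ((i:ℕ)+1 : ℕ) = -(2 * (Real.pi * q)) := by
      push_cast; ring
    have hcos : Real.cos (2 * Real.pi * q * (i:ℝ)) * Real.cos (2 * Real.pi * q * ((i+1:ℕ):ℝ))
        + Real.sin (2 * Real.pi * q * (i:ℝ)) * Real.sin (2 * Real.pi * q * ((i+1:ℕ):ℝ))
        = Real.cos (2 * (Real.pi * q)) := by
      rw [← Real.cos_sub, show 2 * Real.pi * q * (i:ℝ) - 2 * Real.pi * q * ((i+1:ℕ):ℝ)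
        = -(2 * (Real.pi * q)) by push_cast; ring, Real.cos_neg]
    have hc2 : Real.cos (2 * (Real.pi * q)) = 1 - 2 * s ^ 2 := by
      rw [Real.cos_two_mul]
      have := Real.sin_sq_add_cos_sq (Real.pi * q)
      nlinarith
    have hrs : 2 * r * s = 1 := by
      rw [hrdef]; field_simp
    rw [show (r * Real.cos (2 * Real.pi * q * (i:ℝ)) - r * Real.cos (2 * Real.pi * q * ((i+1:ℕ):ℝ))) ^ 2
        + (r * Real.sin (2 * Real.pi * q * (i:ℝ)) - r * Real.sin (2 * Real.pi * q * ((i+1:ℕ):ℝ))) ^ 2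
        = 1 by
      have h1 := Real.sin_sq_add_cos_sq (2 * Real.pi * q * (i:ℝ))
      have h2 := Real.sin_sq_add_cos_sq (2 * Real.pi * q * ((i+1:ℕ):ℝ))
      linear_combination r^2*h1 + r^2*h2 - 2*r^2*hcos - 2*r^2*hc2 + (2*r*s+1)*hrs]
    exact Real.sqrt_one
  · have hql : q * (2 * (k:ℝ) + 1) = l := by
      rw [hqdef]; field_simp
    have harg : 2 * Real.pi * q * ((2*k+1 : ℕ):ℝ) = (l:ℝ) * (2 * Real.pi) := by
      push_cast
      linear_combination 2 * Real.pi * hql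
    have harg' : 2 * Real.pi * q * (2*(k:ℝ)+1) = (l:ℝ) * (2 * Real.pi) := by
      push_cast at harg; linarith [harg]
    have hsin : Real.sin ((l:ℝ) * (2 * Real.pi)) = 0 := by
      rw [show (l:ℝ) * (2 * Real.pi) = ((2*l : ℕ):ℝ) * Real.pi by push_cast; ring]
      exact Real.sin_nat_mul_pi (2*l)
    ext j
    fin_cases j <;>
      simp [harg', hsin, Real.cos_nat_mul_two_pi]

private lemma dens (r₀ : ℝ) (h : 1 / 2 ≤ r₀) (δ : ℝ) (hδ : 0 < δ) :
    ∃ r : ℝ, |r - r₀| < δ ∧ ForbiddenRadius r := by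
  obtain ⟨r₁, hr₁⟩ : ∃ r₁ : ℝ, r₁ = r₀ + δ / 2 := ⟨_, rfl⟩
  have hr₁half : 1 / 2 < r₁ := by rw [hr₁]; linarith
  have hr₁pos : 0 < r₁ := by linarith
  obtain ⟨s₁, hs₁⟩ : ∃ s₁ : ℝ, s₁ = 1 / (2 * r₁) := ⟨_, rfl⟩
  have hs₁pos : 0 < s₁ := by rw [hs₁]; positivity
  have hs₁lt : s₁ < 1 := by
    rw [hs₁, div_lt_one (by linarith)]; linarith
  obtain ⟨q₁, hq₁⟩ : ∃ q₁ : ℝ, q₁ = Real.arcsin s₁ / Real.pi := ⟨_, rfl⟩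
  have hq₁pos : 0 < q₁ := by
    rw [hq₁]
    exact div_pos (Real.arcsin_pos.2 hs₁pos) Real.pi_pos
  have hq₁lt : q₁ < 1 / 2 := by
    rw [hq₁, div_lt_iff₀ Real.pi_pos]
    have := Real.arcsin_lt_pi_div_two.2 hs₁lt
    linarith
  have hsinq₁ : Real.sin (Real.pi * q₁) = s₁ := by
    rw [hq₁, mul_div_cancel₀ _ (ne_of_gt Real.pi_pos)]
    exact Real.sin_arcsin (by linarith) hs₁lt.le
  have hgq₁ : 1 / (2 * Real.sin (Real.pi * q₁)) = r₁ := by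
    rw [hsinq₁, hs₁]
    field_simp
  have hcont : ContinuousAt (fun x => 1 / (2 * Real.sin (Real.pi * x))) q₁ := by
    apply ContinuousAt.div continuousAt_const
    · exact (continuous_const.mul (Real.continuous_sin.comp
        (continuous_const.mul continuous_id))).continuousAt
    · rw [hsinq₁]; positivity
  obtain ⟨η, hη, hball⟩ := Metric.continuousAt_iff.1 hcont (δ / 2) (by linarith)
  obtain ⟨ε, hε⟩ : ∃ ε : ℝ, ε = min η (min q₁ (1 / 2 - q₁)) := ⟨_, rfl⟩
  have hεη : ε ≤ η := hε ▸ min_le_left _ _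
  have hεq₁ : ε ≤ q₁ := hε ▸ le_trans (min_le_right _ _) (min_le_left _ _)
  have hεhalf : ε ≤ 1 / 2 - q₁ := hε ▸ le_trans (min_le_right _ _) (min_le_right _ _)
  have hεpos : 0 < ε := by
    rw [hε]; exact lt_min hη (lt_min hq₁pos (by linarith))
  obtain ⟨m, hm⟩ := exists_nat_gt (1 / ε)
  have hmpos : 0 < (m : ℝ) := lt_trans (by positivity) hm
  have hden : (0:ℝ) < 2 * m + 1 := by positivity
  have hstep : 1 / (2 * (m:ℝ) + 1) < ε := by
    have h1 : 1 / (2 * (m:ℝ) + 1) < 1 / (m:ℝ) := by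
      apply one_div_lt_one_div_of_lt hmpos; linarith
    have h2 : 1 / (m:ℝ) < ε := by
      rw [div_lt_iff₀ hmpos]
      rw [div_lt_iff₀ hεpos] at hm
      nlinarith
    linarith
  obtain ⟨l, hldef⟩ : ∃ l : ℕ, l = ⌈q₁ * (2 * (m:ℝ) + 1)⌉₊ := ⟨_, rfl⟩
  have hlpos : 0 < l := by
    rw [hldef]; exact Nat.ceil_pos.2 (by positivity)
  have hlle : q₁ * (2 * (m:ℝ) + 1) ≤ (l : ℝ) := by
    rw [hldef]; exact Nat.le_ceil _
  have hllt : (l : ℝ) < q₁ * (2 * (m:ℝ) + 1) + 1 := by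
    rw [hldef]; exact Nat.ceil_lt_add_one (by positivity)
  obtain ⟨q, hqdef⟩ : ∃ q : ℝ, q = (l : ℝ) / (2 * (m:ℝ) + 1) := ⟨_, rfl⟩
  have hq₁le : q₁ ≤ q := by
    rw [hqdef, le_div_iff₀ hden]; linarith
  have hqlt : q < q₁ + ε := by
    rw [hqdef, div_lt_iff₀ hden]
    have h1ε : 1 < ε * (2 * (m:ℝ) + 1) := (div_lt_iff₀ hden).1 hstep
    nlinarith
  have hqhalf : q < 1 / 2 := by linarith
  have hforb : ForbiddenRadius (1 / (2 * Real.sin (Real.pi * q))) := by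
    rw [hqdef]
    exact key m l hlpos (by rw [← hqdef]; exact hqhalf)
  refine ⟨1 / (2 * Real.sin (Real.pi * q)), ?_, hforb⟩
  have hdist : dist (1 / (2 * Real.sin (Real.pi * q))) (1 / (2 * Real.sin (Real.pi * q₁))) < δ / 2 := by
    apply hball
    rw [Real.dist_eq, abs_lt]
    constructor <;> linarith
  rw [Real.dist_eq, hgq₁] at hdist
  rw [abs_lt] at hdist ⊢
  constructor <;> [linarith [hdist.1]; linarith [hdist.2]]

/-- Forbidden radii are dense in `[1/2, ∞)`; specifically, for any rational
`q = l/(2k+1) ∈ (0, 1/2)`, the radius `1/(2 sin (π q))` is forbidden. -/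
theorem stmt3 :
    (∀ r₀ : ℝ, 1 / 2 ≤ r₀ → ∀ δ : ℝ, 0 < δ → ∃ r : ℝ, |r - r₀| < δ ∧ ForbiddenRadius r) ∧
    (∀ k l : ℕ, 0 < l → (l : ℝ) / (2 * k + 1) < 1 / 2 →
      ForbiddenRadius (1 / (2 * Real.sin (Real.pi * (l / (2 * k + 1)))))) := by
  exact ⟨dens, key⟩
end

section
/- For every ε with 0 < ε < √(3/7), the chromatic number of the slab ℝ² × [0,ε] with forbidden Euclidean distance 1 is at most 7: there is a proper 7-coloring. -/
/-- The half-open hexagons (in sheared coordinates) cover the plane: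
for any `(x, y)` there is an integer pair `(m, n)` with `3 ∣ m + n` such that
`x - m`, `y - n` and their difference all lie in `[-1, 1)`. -/
lemma hex_covering (x y : ℝ) : ∃ m n : ℤ, (3 : ℤ) ∣ m + n ∧
    -1 ≤ x - m ∧ x - m < 1 ∧ -1 ≤ y - n ∧ y - n < 1 ∧
    -1 ≤ (x - m) - (y - n) ∧ (x - m) - (y - n) < 1 := by
  set a := ⌊x⌋ with ha
  set b := ⌊y⌋ with hb
  have hx1 : (a : ℝ) ≤ x := Int.floor_le x
  have hx2 : x < a + 1 := Int.lt_floor_add_one x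
  have hy1 : (b : ℝ) ≤ y := Int.floor_le y
  have hy2 : y < b + 1 := Int.lt_floor_add_one y
  have h3 : (a + b) % 3 = 0 ∨ (a + b) % 3 = 1 ∨ (a + b) % 3 = 2 := by omega
  rcases h3 with h | h | h
  · refine ⟨a, b, by omega, ?_⟩
    push_cast
    refine ⟨by linarith, by linarith, by linarith, by linarith, by linarith, by linarith⟩
  · refine ⟨a + 1, b + 1, by omega, ?_⟩
    push_cast
    refine ⟨by linarith, by linarith, by linarith, by linarith, by linarith, by linarith⟩
  · by_cases hc : x - a ≥ y - b
    · refine ⟨a + 1, b, by omega, ?_⟩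
      push_cast
      refine ⟨by linarith, by linarith, by linarith, by linarith, by linarith, by linarith⟩
    · refine ⟨a, b + 1, by omega, ?_⟩
      push_cast
      refine ⟨by linarith, by linarith, by linarith, by linarith, by linarith, by linarith⟩

/-- Two points in the same hexagon: the quadratic form is at most 4. -/
lemma hex_nearQ (F1 F2 : ℝ) (h1 : |F1| < 2) (h2 : |F2| < 2) (h12 : |F1 - F2| < 2) :
    F1^2 - F1*F2 + F2^2 ≤ 4 := by
  rw [abs_lt] at h1 h2 h12
  rcases le_total 0 F1 with hs1 | hs1 <;> rcases le_total 0 F2 with hs2 | hs2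
  · nlinarith [mul_nonneg hs1 hs2]
  · nlinarith [mul_nonneg hs1 (neg_nonneg.2 hs2)]
  · nlinarith [mul_nonneg (neg_nonneg.2 hs1) hs2]
  · nlinarith [mul_nonneg (neg_nonneg.2 hs1) (neg_nonneg.2 hs2)]

set_option maxHeartbeats 1000000 in
/-- Two points in distinct hexagons of the same color: the quadratic form exceeds 7. -/
lemma hex_farQ (M N : ℤ) (hMN : ¬(M = 0 ∧ N = 0)) (h7 : (7:ℤ) ∣ M + 2*N)
    (h3 : (3:ℤ) ∣ M + N)
    (F1 F2 : ℝ) (h1 : |F1 - M| < 2) (h2 : |F2 - N| < 2)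
    (h12 : |(F1 - F2) - (M - N)| < 2) :
    7 < F1^2 - F1*F2 + F2^2 := by
  rcases le_or_gt (16/5 : ℝ) |F1| with hb | hb
  · nlinarith [sq_nonneg (2*F2 - F1), sq_abs F1, abs_nonneg F1]
  rcases le_or_gt (16/5 : ℝ) |F2| with hb2 | hb2
  · nlinarith [sq_nonneg (2*F1 - F2), sq_abs F2, abs_nonneg F2]
  rcases le_or_gt (16/5 : ℝ) |F1 - F2| with hb3 | hb3
  · nlinarith [sq_nonneg (F1 + F2), sq_abs (F1 - F2), abs_nonneg (F1 - F2)]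
  rw [abs_lt] at h1 h2 h12 hb hb2 hb3
  obtain ⟨h1a, h1b⟩ := h1
  obtain ⟨h2a, h2b⟩ := h2
  obtain ⟨h12a, h12b⟩ := h12
  obtain ⟨hba, hbb⟩ := hb
  obtain ⟨hb2a, hb2b⟩ := hb2
  obtain ⟨hb3a, hb3b⟩ := hb3
  have hM1 : -6 < M := by exact_mod_cast (by linarith : (-6:ℝ) < M)
  have hM2 : M < 6 := by exact_mod_cast (by linarith : (M:ℝ) < 6)
  have hN1 : -6 < N := by exact_mod_cast (by linarith : (-6:ℝ) < N)
  have hN2 : N < 6 := by exact_mod_cast (by linarith : (N:ℝ) < 6)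
  have hD1 : -6 < M - N := by
    exact_mod_cast (by push_cast; linarith : (-6:ℝ) < (M:ℝ) - N)
  have hD2 : M - N < 6 := by
    exact_mod_cast (by push_cast; linarith : ((M:ℝ) - N) < 6)
  have hcases : (M = 5 ∧ N = 1) ∨ (M = -5 ∧ N = -1) ∨ (M = 1 ∧ N = -4) ∨
      (M = -1 ∧ N = 4) ∨ (M = 4 ∧ N = 5) ∨ (M = -4 ∧ N = -5) := by
    have hM1' : -5 ≤ M := by omega
    have hM2' : M ≤ 5 := by omega
    interval_cases M <;> omega
  rcases hcases with ⟨rfl, rfl⟩ | ⟨rfl, rfl⟩ | ⟨rfl, rfl⟩ | ⟨rfl, rfl⟩ | ⟨rfl, rfl⟩ | ⟨rfl, rfl⟩ <;>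
    push_cast at h1a h1b h2a h2b h12a h12b <;>
    [ nlinarith [sq_nonneg (2*F1 - F2 - 5), sq_nonneg (F2 - 1)];
      nlinarith [sq_nonneg (2*F1 - F2 + 5), sq_nonneg (F2 + 1)];
      nlinarith [sq_nonneg (2*F1 - F2 - 4), sq_nonneg (F2 + 2)];
      nlinarith [sq_nonneg (2*F1 - F2 + 4), sq_nonneg (F2 - 2)];
      nlinarith [sq_nonneg (2*F1 - F2 - 1), sq_nonneg (F2 - 3)];
      nlinarith [sq_nonneg (2*F1 - F2 + 1), sq_nonneg (F2 + 3)] ]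

set_option maxHeartbeats 1600000 in
/-- For `0 < ε < √(3/7)`, the slab `ℝ² × [0, ε] ⊆ ℝ³` admits a proper 7-coloring with
forbidden Euclidean distance 1. -/
theorem stmt5 (ε : ℝ) (hε : 0 < ε) (hε' : ε < Real.sqrt (3 / 7)) :
    ∃ c : {p : EuclideanSpace ℝ (Fin 3) // p 2 ∈ Set.Icc 0 ε} → Fin 7,
      ∀ x y : {p : EuclideanSpace ℝ (Fin 3) // p 2 ∈ Set.Icc 0 ε},
        dist (x : EuclideanSpace ℝ (Fin 3)) (y : EuclideanSpace ℝ (Fin 3)) = 1 →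
          c x ≠ c y := by
  classical
  choose m n hdvd hu1 hu2 hv1 hv2 hw1 hw2 using hex_covering
  obtain ⟨c2, hc2, hc2nn⟩ : ∃ c2 : ℝ, c2^2 = 7/3 ∧ 0 ≤ c2 :=
    ⟨Real.sqrt (7/3), Real.sq_sqrt (by norm_num), Real.sqrt_nonneg _⟩
  obtain ⟨s3, hs3, hs3nn⟩ : ∃ s3 : ℝ, s3^2 = 3 ∧ 0 ≤ s3 :=
    ⟨Real.sqrt 3, Real.sq_sqrt (by norm_num), Real.sqrt_nonneg _⟩
  refine ⟨fun p => ⟨((2 * m (2*c2*(p.1 0)) (c2*(p.1 0 + s3*(p.1 1)))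
      + 4 * n (2*c2*(p.1 0)) (c2*(p.1 0 + s3*(p.1 1)))) % 7).toNat,
    by omega⟩, ?_⟩
  intro x y hdist hcol
  simp only [Fin.mk.injEq] at hcol
  set px := (x : EuclideanSpace ℝ (Fin 3)) with hpx
  set py := (y : EuclideanSpace ℝ (Fin 3)) with hpy
  set Xx := 2*c2*(px 0) with hXx
  set Yx := c2*(px 0 + s3*(px 1)) with hYx
  set Xy := 2*c2*(py 0) with hXy
  set Yy := c2*(py 0 + s3*(py 1)) with hYy
  set mx := m Xx Yx with hmx
  set nx := n Xx Yx with hnx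
  set my := m Xy Yy with hmy
  set ny := n Xy Yy with hny
  -- color equality gives divisibility
  have h7 : (7:ℤ) ∣ (mx - my) + 2*(nx - ny) := by omega
  have h3 : (3:ℤ) ∣ (mx - my) + (nx - ny) := by
    have a1 := hdvd Xx Yx
    have a2 := hdvd Xy Yy
    omega
  -- squared distance
  have hSnn : (0:ℝ) ≤ (px 0 - py 0)^2 + (px 1 - py 1)^2 + (px 2 - py 2)^2 := by positivity
  have hS : (px 0 - py 0)^2 + (px 1 - py 1)^2 + (px 2 - py 2)^2 = 1 := by
    have hd' : Real.sqrt ((px 0 - py 0)^2 + (px 1 - py 1)^2 + (px 2 - py 2)^2) = 1 := by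
      rw [← hdist, EuclideanSpace.dist_eq, Fin.sum_univ_three]
      simp [Real.dist_eq, sq_abs]
    have h2 := Real.sq_sqrt hSnn
    rw [hd'] at h2
    linarith [h2]
  -- vertical displacement
  have hzx := x.2
  have hzy := y.2
  simp only [Set.mem_Icc] at hzx hzy
  have hdz : (px 2 - py 2)^2 ≤ ε^2 := by nlinarith [hzx.1, hzx.2, hzy.1, hzy.2]
  have hε2 : ε^2 < 3/7 := by
    have hq : Real.sqrt (3/7) ^ 2 = 3/7 := Real.sq_sqrt (by norm_num)
    nlinarith [Real.sqrt_nonneg (3/7 : ℝ)]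
  -- planar squared distance
  have hP1 : 4/7 < (px 0 - py 0)^2 + (px 1 - py 1)^2 := by nlinarith
  have hP2 : (px 0 - py 0)^2 + (px 1 - py 1)^2 ≤ 1 := by nlinarith [sq_nonneg (px 2 - py 2)]
  -- the quadratic form identity
  have hQ : (Xx - Xy)^2 - (Xx - Xy)*(Yx - Yy) + (Yx - Yy)^2
      = 7*((px 0 - py 0)^2 + (px 1 - py 1)^2) := by
    rw [hXx, hXy, hYx, hYy]
    linear_combination (3*(px 0 - py 0)^2 + 3*(px 1 - py 1)^2) * hc2 +
      (c2^2 * (px 1 - py 1)^2) * hs3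
  -- membership bounds
  have b1x1 := hu1 Xx Yx; have b1x2 := hu2 Xx Yx
  have b1y1 := hu1 Xy Yy; have b1y2 := hu2 Xy Yy
  have b2x1 := hv1 Xx Yx; have b2x2 := hv2 Xx Yx
  have b2y1 := hv1 Xy Yy; have b2y2 := hv2 Xy Yy
  have b3x1 := hw1 Xx Yx; have b3x2 := hw2 Xx Yx
  have b3y1 := hw1 Xy Yy; have b3y2 := hw2 Xy Yy
  have hb1 : |(Xx - Xy) - ((mx - my : ℤ) : ℝ)| < 2 := by
    rw [abs_lt]; push_cast; constructor <;> linarith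
  have hb2 : |(Yx - Yy) - ((nx - ny : ℤ) : ℝ)| < 2 := by
    rw [abs_lt]; push_cast; constructor <;> linarith
  have hb3 : |((Xx - Xy) - (Yx - Yy)) - (((mx - my : ℤ) : ℝ) - ((nx - ny : ℤ) : ℝ))| < 2 := by
    rw [abs_lt]; push_cast; constructor <;> linarith
  by_cases h0 : mx - my = 0 ∧ nx - ny = 0
  · -- same hexagon : planar distance too small
    have hz1 : |Xx - Xy| < 2 := by
      have h' := hb1; rw [h0.1] at h'; simpa using h'
    have hz2 : |Yx - Yy| < 2 := by
      have h' := hb2; rw [h0.2] at h'; simpa using h'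
    have hz3 : |(Xx - Xy) - (Yx - Yy)| < 2 := by
      have h' := hb3; rw [h0.1, h0.2] at h'; simpa using h'
    have h4 := hex_nearQ (Xx - Xy) (Yx - Yy) hz1 hz2 hz3
    linarith
  · -- different hexagons of the same color : planar distance too large
    have h7' := hex_farQ (mx - my) (nx - ny) h0 h7 h3 (Xx - Xy) (Yx - Yy) hb1 hb2 hb3
    linarith
end

section
/- For every k ∈ ℕ there exists ε₀(k) > 0 such that for all 0 < ε < ε₀(k), the space ℝ² × [0,ε]^k admits a proper 7-coloring with forbidden Euclidean distance 1. One may take ε₀(k) = √(3/(7k)). -/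
/-- Integer color of a plane point: sheared brick pattern, bricks `10/13 × 7/13`,
row shear `66/13`, color `(i + 2j) mod 7`. -/
noncomputable def brickCol (x y : ℝ) : ℤ :=
  (⌊(13*x - 66*(⌊13*y/7⌋ : ℝ))/10⌋ + 2*⌊13*y/7⌋) % 7

lemma brickCol_mem (x y : ℝ) : 0 ≤ brickCol x y ∧ brickCol x y < 7 := by
  unfold brickCol; omega

private lemma brick_cases (di dj : ℤ) (hdvd : (7:ℤ) ∣ di + 2*dj) :
    (di = 0 ∧ dj = 0) ∨ (3 ≤ dj ∨ dj ≤ -3) ∨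
    ((dj = 1 ∨ dj = -1) ∧ (24 ≤ 10*di+66*dj ∨ 10*di+66*dj ≤ -24)) ∨
    ((dj = 2 ∨ dj = -2) ∧ (22 ≤ 10*di+66*dj ∨ 10*di+66*dj ≤ -22)) ∨
    (dj = 0 ∧ (70 ≤ 10*di ∨ 10*di ≤ -70)) := by
  have h : dj ≤ -3 ∨ dj = -2 ∨ dj = -1 ∨ dj = 0 ∨ dj = 1 ∨ dj = 2 ∨ 3 ≤ dj := by omega
  rcases h with h | h | h | h | h | h | h <;> subst_vars <;> omega

set_option maxHeartbeats 1000000 in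
private lemma brick_key (x₁ y₁ x₂ y₂ : ℝ) (hc : brickCol x₁ y₁ = brickCol x₂ y₂)
    (hle : (x₁-x₂)^2 + (y₁-y₂)^2 ≤ 1) :
    (x₁-x₂)^2 + (y₁-y₂)^2 < 149/169 := by
  set j₁ : ℤ := ⌊13*y₁/7⌋ with hj₁
  set j₂ : ℤ := ⌊13*y₂/7⌋ with hj₂
  set i₁ : ℤ := ⌊(13*x₁ - 66*(j₁ : ℝ))/10⌋ with hi₁
  set i₂ : ℤ := ⌊(13*x₂ - 66*(j₂ : ℝ))/10⌋ with hi₂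
  have b₁ : 7*(j₁:ℝ) ≤ 13*y₁ := by
    have := Int.floor_le (13*y₁/7); rw [← hj₁] at this; linarith
  have b₁' : 13*y₁ < 7*(j₁:ℝ) + 7 := by
    have := Int.lt_floor_add_one (13*y₁/7); rw [← hj₁] at this; push_cast at this; linarith
  have b₂ : 7*(j₂:ℝ) ≤ 13*y₂ := by
    have := Int.floor_le (13*y₂/7); rw [← hj₂] at this; linarith
  have b₂' : 13*y₂ < 7*(j₂:ℝ) + 7 := by
    have := Int.lt_floor_add_one (13*y₂/7); rw [← hj₂] at this; push_cast at this; linarith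
  have a₁ : 10*(i₁:ℝ) ≤ 13*x₁ - 66*(j₁:ℝ) := by
    have := Int.floor_le ((13*x₁ - 66*(j₁ : ℝ))/10); rw [← hi₁] at this; linarith
  have a₁' : 13*x₁ - 66*(j₁:ℝ) < 10*(i₁:ℝ) + 10 := by
    have := Int.lt_floor_add_one ((13*x₁ - 66*(j₁ : ℝ))/10); rw [← hi₁] at this
    push_cast at this; linarith
  have a₂ : 10*(i₂:ℝ) ≤ 13*x₂ - 66*(j₂:ℝ) := by
    have := Int.floor_le ((13*x₂ - 66*(j₂ : ℝ))/10); rw [← hi₂] at this; linarith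
  have a₂' : 13*x₂ - 66*(j₂:ℝ) < 10*(i₂:ℝ) + 10 := by
    have := Int.lt_floor_add_one ((13*x₂ - 66*(j₂ : ℝ))/10); rw [← hi₂] at this
    push_cast at this; linarith
  have hdvd : (7:ℤ) ∣ (i₁ - i₂) + 2*(j₁ - j₂) := by
    unfold brickCol at hc
    rw [← hj₁, ← hj₂, ← hi₁, ← hi₂] at hc
    omega
  clear_value i₁ i₂ j₁ j₂
  clear hc hj₁ hj₂ hi₁ hi₂
  rcases brick_cases (i₁ - i₂) (j₁ - j₂) hdvd with
    ⟨hdi, hdj⟩ | (h | h) | ⟨h1, h2⟩ | ⟨h1, h2⟩ | ⟨h1, h2⟩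
  · -- same cell
    have e1 : (i₁:ℝ) = i₂ := by
      have : i₁ = i₂ := by omega
      exact_mod_cast this
    have e2 : (j₁:ℝ) = j₂ := by
      have : j₁ = j₂ := by omega
      exact_mod_cast this
    nlinarith [sq_nonneg (x₁ - x₂), sq_nonneg (y₁ - y₂)]
  all_goals exfalso
  · -- dj ≥ 3 : vertical gap ≥ 14
    have hjr : 3 ≤ (j₁:ℝ) - j₂ := by exact_mod_cast h
    have hy : 14 < 13*(y₁-y₂) := by linarith
    have hy2 : 196 < (13*(y₁-y₂))^2 := by nlinarith
    nlinarith [sq_nonneg (x₁ - x₂)]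
  · have hjr : (j₁:ℝ) - j₂ ≤ -3 := by exact_mod_cast h
    have hy : 13*(y₁-y₂) < -14 := by linarith
    have hy2 : 196 < (13*(y₁-y₂))^2 := by nlinarith
    nlinarith [sq_nonneg (x₁ - x₂)]
  · -- |dj| = 1 : horizontal gap > 14
    have hx2 : 196 < (13*(x₁-x₂))^2 := by
      rcases h2 with h2 | h2
      · have hPr : (24:ℝ) ≤ 10*((i₁:ℝ)-i₂) + 66*((j₁:ℝ)-j₂) := by exact_mod_cast h2
        have hx : 14 < 13*(x₁-x₂) := by linarith
        nlinarith
      · have hPr : 10*((i₁:ℝ)-i₂) + 66*((j₁:ℝ)-j₂) ≤ -24 := by exact_mod_cast h2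
        have hx : 13*(x₁-x₂) < -14 := by linarith
        nlinarith
    nlinarith [sq_nonneg (y₁ - y₂)]
  · -- |dj| = 2 : horizontal gap > 12, vertical gap > 7
    have hx2 : 144 < (13*(x₁-x₂))^2 := by
      rcases h2 with h2 | h2
      · have hPr : (22:ℝ) ≤ 10*((i₁:ℝ)-i₂) + 66*((j₁:ℝ)-j₂) := by exact_mod_cast h2
        have hx : 12 < 13*(x₁-x₂) := by linarith
        nlinarith
      · have hPr : 10*((i₁:ℝ)-i₂) + 66*((j₁:ℝ)-j₂) ≤ -22 := by exact_mod_cast h2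
        have hx : 13*(x₁-x₂) < -12 := by linarith
        nlinarith
    have hy2 : 49 < (13*(y₁-y₂))^2 := by
      rcases h1 with h1 | h1
      · have hjr : (j₁:ℝ) - j₂ = 2 := by exact_mod_cast h1
        have hy : 7 < 13*(y₁-y₂) := by linarith
        nlinarith
      · have hjr : (j₁:ℝ) - j₂ = -2 := by exact_mod_cast h1
        have hy : 13*(y₁-y₂) < -7 := by linarith
        nlinarith
    nlinarith
  · -- dj = 0, di ≠ 0 : horizontal gap > 60
    have hjr : (j₁:ℝ) = j₂ := by
      have : j₁ = j₂ := by omega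
      exact_mod_cast this
    have hx2 : 3600 < (13*(x₁-x₂))^2 := by
      rcases h2 with h2 | h2
      · have hPr : (70:ℝ) ≤ 10*((i₁:ℝ)-i₂) := by exact_mod_cast h2
        have hx : 60 < 13*(x₁-x₂) := by linarith
        nlinarith
      · have hPr : 10*((i₁:ℝ)-i₂) ≤ -70 := by exact_mod_cast h2
        have hx : 13*(x₁-x₂) < -60 := by linarith
        nlinarith
    nlinarith [sq_nonneg (y₁ - y₂)]

/-- For every `k` there is `ε₀ > 0` such that for all `0 < ε < ε₀` the space
`ℝ² × [0, ε]^k ⊆ ℝ^(2+k)` (points whose coordinates of index `≥ 2` lie in `[0, ε]`)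
admits a proper 7-coloring with forbidden Euclidean distance 1. -/
theorem stmt6 (k : ℕ) :
    ∃ ε₀ : ℝ, 0 < ε₀ ∧ ∀ ε : ℝ, 0 < ε → ε < ε₀ →
      ∃ c : {p : EuclideanSpace ℝ (Fin (2 + k)) // ∀ i : Fin (2 + k), 2 ≤ (i : ℕ) →
          p i ∈ Set.Icc 0 ε} → Fin 7,
        ∀ x y : {p : EuclideanSpace ℝ (Fin (2 + k)) // ∀ i : Fin (2 + k), 2 ≤ (i : ℕ) →
            p i ∈ Set.Icc 0 ε},
          dist (x : EuclideanSpace ℝ (Fin (2 + k))) (y : EuclideanSpace ℝ (Fin (2 + k))) = 1 →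
            c x ≠ c y := by
  haveI : NeZero (2 + k) := ⟨by omega⟩
  refine ⟨Real.sqrt (20 / (169 * (k + 2))), Real.sqrt_pos.mpr (by positivity), ?_⟩
  intro ε hε hεlt
  have hε2 : (2 + (k:ℝ)) * ε ^ 2 < 20 / 169 := by
    have h1 : ε ^ 2 < 20 / (169 * ((k:ℝ) + 2)) := by
      have hs := Real.sq_sqrt (le_of_lt (show (0:ℝ) < 20 / (169 * ((k:ℝ) + 2)) by positivity))
      push_cast at hεlt
      nlinarith [hεlt, hε, Real.sqrt_nonneg (20 / (169 * ((k:ℝ) + 2)))]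
    have hk : (0:ℝ) < (k:ℝ) + 2 := by positivity
    calc (2 + (k:ℝ)) * ε ^ 2 < (2 + (k:ℝ)) * (20 / (169 * ((k:ℝ) + 2))) := by
          apply mul_lt_mul_of_pos_left h1 (by positivity)
      _ = 20 / 169 := by field_simp; ring
  refine ⟨fun p => ⟨(brickCol (p.1 0) (p.1 1)).toNat,
    by have := brickCol_mem (p.1 0) (p.1 1); omega⟩, ?_⟩
  intro x y hdist hcol
  have hv : (brickCol (x.1 0) (x.1 1)).toNat = (brickCol (y.1 0) (y.1 1)).toNat :=
    congrArg Fin.val hcol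
  clear hcol
  have h00 : ((0 : Fin (2+k)) : ℕ) = 0 := rfl
  have h11 : ((1 : Fin (2+k)) : ℕ) = 1 := by rw [Fin.val_one']; exact Nat.mod_eq_of_lt (by omega)
  -- extract sum of squares = 1
  have hS : ∑ i, dist (x.1 i) (y.1 i) ^ 2 = 1 := by
    have h := EuclideanSpace.dist_eq (x : EuclideanSpace ℝ (Fin (2+k))) y
    rw [hdist] at h
    exact Real.sqrt_eq_one.mp h.symm
  have hsplit := Finset.sum_filter_add_sum_filter_not Finset.univ
    (fun i : Fin (2+k) => 2 ≤ (i : ℕ)) (fun i => dist (x.1 i) (y.1 i) ^ 2)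
  -- tail bound
  have htail : ∑ i ∈ Finset.univ.filter (fun i : Fin (2+k) => 2 ≤ (i : ℕ)),
      dist (x.1 i) (y.1 i) ^ 2 < 20 / 169 := by
    have hbd : ∀ i ∈ Finset.univ.filter (fun i : Fin (2+k) => 2 ≤ (i : ℕ)),
        dist (x.1 i) (y.1 i) ^ 2 ≤ ε ^ 2 := by
      intro i hi
      rw [Finset.mem_filter] at hi
      obtain ⟨hx1, hx2⟩ := x.2 i hi.2
      obtain ⟨hy1, hy2⟩ := y.2 i hi.2
      rw [Real.dist_eq, sq_abs]
      nlinarith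
    calc ∑ i ∈ Finset.univ.filter (fun i : Fin (2+k) => 2 ≤ (i : ℕ)),
          dist (x.1 i) (y.1 i) ^ 2
        ≤ ∑ _i ∈ Finset.univ.filter (fun i : Fin (2+k) => 2 ≤ (i : ℕ)), ε ^ 2 :=
          Finset.sum_le_sum hbd
      _ = (Finset.univ.filter (fun i : Fin (2+k) => 2 ≤ (i : ℕ))).card * ε ^ 2 := by
          rw [Finset.sum_const, nsmul_eq_mul]
      _ ≤ (2 + (k:ℝ)) * ε ^ 2 := by
          apply mul_le_mul_of_nonneg_right _ (sq_nonneg ε)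
          have hcl := Finset.card_filter_le Finset.univ (fun i : Fin (2+k) => 2 ≤ (i : ℕ))
          have hcard : (Finset.univ : Finset (Fin (2+k))).card = 2 + k := by simp
          rw [hcard] at hcl
          exact_mod_cast hcl
      _ < 20 / 169 := hε2
  -- head is exactly the two plane coordinates
  have hfilter : Finset.univ.filter (fun i : Fin (2+k) => ¬ 2 ≤ (i : ℕ)) =
      {(0 : Fin (2+k)), (1 : Fin (2+k))} := by
    ext i
    simp only [Finset.mem_filter, Finset.mem_univ, true_and, Finset.mem_insert,
      Finset.mem_singleton, Fin.ext_iff, h00, h11]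
    omega
  have hne01 : (0 : Fin (2+k)) ∉ ({(1 : Fin (2+k))} : Finset (Fin (2+k))) := by
    rw [Finset.mem_singleton]
    intro hcontra
    have := congrArg Fin.val hcontra
    rw [h00, h11] at this
    omega
  have hhead : ∑ i ∈ Finset.univ.filter (fun i : Fin (2+k) => ¬ 2 ≤ (i : ℕ)),
      dist (x.1 i) (y.1 i) ^ 2 =
      dist (x.1 0) (y.1 0) ^ 2 + dist (x.1 1) (y.1 1) ^ 2 := by
    rw [hfilter, Finset.sum_insert hne01, Finset.sum_singleton]
  have htot : dist (x.1 0) (y.1 0) ^ 2 + dist (x.1 1) (y.1 1) ^ 2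
      + ∑ i ∈ Finset.univ.filter (fun i : Fin (2+k) => 2 ≤ (i : ℕ)),
        dist (x.1 i) (y.1 i) ^ 2 = 1 := by
    rw [← hhead, add_comm, hsplit, hS]
  have h1 : dist (x.1 0) (y.1 0) ^ 2 = (x.1 0 - y.1 0)^2 := by rw [Real.dist_eq, sq_abs]
  have h2 : dist (x.1 1) (y.1 1) ^ 2 = (x.1 1 - y.1 1)^2 := by rw [Real.dist_eq, sq_abs]
  rw [h1, h2] at htot
  -- same brick color
  have hcol' : brickCol (x.1 0) (x.1 1) = brickCol (y.1 0) (y.1 1) := by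
    have hb1 := brickCol_mem (x.1 0) (x.1 1)
    have hb2 := brickCol_mem (y.1 0) (y.1 1)
    omega
  have hq : 0 ≤ ∑ i ∈ Finset.univ.filter (fun i : Fin (2+k) => 2 ≤ (i : ℕ)),
      dist (x.1 i) (y.1 i) ^ 2 := Finset.sum_nonneg fun i _ => sq_nonneg _
  have hle : (x.1 0 - y.1 0)^2 + (x.1 1 - y.1 1)^2 ≤ 1 := by linarith
  have hkey := brick_key (x.1 0) (x.1 1) (y.1 0) (y.1 1) hcol' hle
  linarith
end

section
/- For every ε with 0 < ε < √(3/7), every proper coloring of the slab ℝ² × [0,ε] with forbidden Euclidean distance 1 uses at least 5 colors. -/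
open Real

noncomputable def slabPt (a b z : ℝ) : EuclideanSpace ℝ (Fin 3) :=
  (WithLp.equiv 2 (Fin 3 → ℝ)).symm ![a, b, z]

lemma slabPt_two (a b z : ℝ) : slabPt a b z 2 = z := rfl

lemma slabPt_congr {a b z a' b' z' : ℝ} (h1 : a = a') (h2 : b = b') (h3 : z = z') :
    slabPt a b z = slabPt a' b' z' := by rw [h1, h2, h3]

lemma dist_slabPt (a b z a' b' z' : ℝ) :
    dist (slabPt a b z) (slabPt a' b' z') = Real.sqrt ((a-a')^2 + (b-b')^2 + (z-z')^2) := by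
  rw [EuclideanSpace.dist_eq]
  simp [slabPt, Fin.sum_univ_three, Real.dist_eq, sq_abs]

lemma my_sqrt_one {x : ℝ} (h : x = 1) : Real.sqrt x = 1 := by rw [h]; exact Real.sqrt_one

lemma fin4_aux : ∀ a b p q r : Fin 4,
    a≠b → p≠a → p≠b → q≠a → q≠b → r≠a → r≠b → p≠q → q≠r → p = r := by decide

lemma sin_sub_sin_le (a b : ℝ) (h : b ≤ a) : Real.sin a - Real.sin b ≤ a - b := by
  rw [Real.sin_sub_sin]
  have h1 : Real.sin ((a-b)/2) ≤ (a-b)/2 := Real.sin_le (by linarith)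
  have h2 : Real.cos ((a+b)/2) ≤ 1 := Real.cos_le_one _
  have h3 : -1 ≤ Real.cos ((a+b)/2) := Real.neg_one_le_cos _
  have h4 : -((a-b)/2) ≤ Real.sin ((a-b)/2) := by
    have h5 := Real.abs_sin_le_abs (x := (a-b)/2)
    rw [abs_of_nonneg (by linarith : (0:ℝ) ≤ (a-b)/2), abs_le] at h5
    exact h5.1
  nlinarith

set_option maxHeartbeats 1000000 in
/-- For `0 < ε < √(3/7)`, every proper coloring of the slab `ℝ² × [0, ε] ⊆ ℝ³` with
forbidden Euclidean distance 1 uses at least 5 colors: every 4-coloring has a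
monochromatic pair at distance exactly 1. -/
theorem stmt7 (ε : ℝ) (hε : 0 < ε) (hε' : ε < Real.sqrt (3 / 7)) :
    ∀ c : {p : EuclideanSpace ℝ (Fin 3) // p 2 ∈ Set.Icc 0 ε} → Fin 4,
      ∃ x y : {p : EuclideanSpace ℝ (Fin 3) // p 2 ∈ Set.Icc 0 ε},
        dist (x : EuclideanSpace ℝ (Fin 3)) (y : EuclideanSpace ℝ (Fin 3)) = 1 ∧
          c x = c y := by
  intro c
  by_contra hcontra
  push_neg at hcontra
  have hpi := Real.pi_gt_three
  have hpi0 := Real.pi_pos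
  have hε1 : ε < 1 := by
    have h1 : Real.sqrt (3/7) < 1 := by
      rw [show (1:ℝ) = Real.sqrt 1 by rw [Real.sqrt_one]]
      exact Real.sqrt_lt_sqrt (by norm_num) (by norm_num)
    linarith only [hε', h1]
  have hA0 : (0:ℝ) < Real.sqrt (4 - ε^2) :=
    Real.sqrt_pos.mpr (by nlinarith only [hε, hε1])
  have hAsq : Real.sqrt (4 - ε^2)^2 = 4 - ε^2 :=
    Real.sq_sqrt (by nlinarith only [hε, hε1])
  have hA2 : Real.sqrt (4 - ε^2) < 2 := by
    nlinarith only [hA0, hAsq, mul_pos hε hε]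
  have hηpos : (0:ℝ) < 1/Real.sqrt (4 - ε^2) - 1/2 := by
    rw [sub_pos, div_lt_div_iff₀ (by norm_num) hA0]
    linarith only [hA2]
  have hminv : (0:ℝ) < min (1/Real.sqrt (4 - ε^2) - 1/2) 1 := lt_min hηpos one_pos
  -- choose the odd q = 3^n
  obtain ⟨n, hn⟩ := pow_unbounded_of_one_lt
    (π / min (1/Real.sqrt (4 - ε^2) - 1/2) 1) (by norm_num : (1:ℝ) < 3)
  obtain ⟨q, hqdef⟩ : ∃ q : ℕ, q = 3^n := ⟨_, rfl⟩
  obtain ⟨m, hm⟩ : ∃ m : ℕ, q = 2*m+1 := by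
    have : Odd q := hqdef ▸ Odd.pow (⟨1, by norm_num⟩ : Odd 3)
    obtain ⟨m, hm⟩ := this; exact ⟨m, by omega⟩
  have hq1 : 1 ≤ q := by omega
  have hq0R : (0:ℝ) < (q:ℝ) := by exact_mod_cast hq1
  have hnR : π / min (1/Real.sqrt (4 - ε^2) - 1/2) 1 < (q:ℝ) := by
    rw [hqdef]; push_cast; exact hn
  have hπq : π/(q:ℝ) < min (1/Real.sqrt (4 - ε^2) - 1/2) 1 := by
    rw [div_lt_iff₀ hq0R]
    rw [div_lt_iff₀ hminv] at hnR
    linarith only [hnR]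
  obtain ⟨k, hkdef⟩ : ∃ k : ℕ, k = q/6 + 1 := ⟨_, rfl⟩
  have hk6 : q < 6*k ∧ 6*k ≤ q + 6 := by omega
  have hk6R : (q:ℝ) < 6*(k:ℝ) ∧ 6*(k:ℝ) ≤ (q:ℝ) + 6 := by
    refine ⟨?_, ?_⟩
    · exact_mod_cast hk6.1
    · exact_mod_cast hk6.2
  -- the half-angle
  obtain ⟨θh, hθh⟩ : ∃ x : ℝ, x = π*(k:ℝ)/(q:ℝ) := ⟨_, rfl⟩
  have hθlow : π/6 < θh := by
    rw [hθh, lt_div_iff₀ hq0R]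
    nlinarith only [hk6R.1, hpi0]
  have hθhigh : θh < π/6 + min (1/Real.sqrt (4 - ε^2) - 1/2) 1 := by
    have h1 : θh ≤ π/6 + π/(q:ℝ) := by
      rw [hθh, div_le_iff₀ hq0R]
      have he : (π/6 + π/(q:ℝ))*(q:ℝ) = π*(q:ℝ)/6 + π := by
        field_simp
      rw [he]
      have h2 := mul_le_mul_of_nonneg_left hk6R.2 hpi0.le
      linarith only [h2]
    linarith only [h1, hπq]
  have hθ12 : θh < π/2 := by
    have h1 : min (1/Real.sqrt (4 - ε^2) - 1/2) 1 ≤ 1 := min_le_right _ _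
    linarith only [hθhigh, h1, hpi]
  -- s = sin θh
  obtain ⟨s, hs⟩ : ∃ s : ℝ, s = Real.sin θh := ⟨_, rfl⟩
  have hs1 : 1/2 < s := by
    rw [hs, ← Real.sin_pi_div_six]
    exact Real.strictMonoOn_sin ⟨by linarith only [hpi0], by linarith only [hpi0]⟩
      ⟨by linarith only [hθlow, hpi0], by linarith only [hθ12]⟩ hθlow
  have hspos : 0 < s := by linarith only [hs1]
  have hs_ub : s < 1/Real.sqrt (4 - ε^2) := by
    have h1 := sin_sub_sin_le θh (π/6) (le_of_lt hθlow)
    rw [Real.sin_pi_div_six] at h1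
    have h2 : min (1/Real.sqrt (4 - ε^2) - 1/2) 1 ≤ 1/Real.sqrt (4 - ε^2) - 1/2 :=
      min_le_left _ _
    rw [hs]; linarith only [h1, h2, hθhigh]
  have hs2 : s^2*(4 - ε^2) < 1 := by
    have hsA : s * Real.sqrt (4 - ε^2) < 1 := (lt_div_iff₀ hA0).mp hs_ub
    nlinarith only [hsA, mul_pos hspos hA0, hAsq]
  -- d
  have h1s4 : 1/s^2 < 4 := by
    rw [div_lt_iff₀ (by positivity)]
    nlinarith only [hs1]
  obtain ⟨d, hd⟩ : ∃ d : ℝ, d = Real.sqrt (4 - 1/s^2) := ⟨_, rfl⟩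
  have hd0 : 0 < d := by rw [hd]; exact Real.sqrt_pos.mpr (by linarith only [h1s4])
  have hd2 : d^2 = 4 - 1/s^2 := by rw [hd]; exact Real.sq_sqrt (by linarith only [h1s4])
  have hdε : d < ε := by
    rw [hd, Real.sqrt_lt' hε]
    have hss : (0:ℝ) < s^2 := by positivity
    have h3 : 4 - ε^2 < 1/s^2 := by
      rw [lt_div_iff₀ hss]
      nlinarith only [hs2]
    linarith only [h3]
  -- r
  obtain ⟨r, hr⟩ : ∃ r : ℝ, r = 1/(2*s) := ⟨_, rfl⟩
  have hr0 : 0 < r := by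
    rw [hr]; exact div_pos one_pos (by linarith only [hspos])
  have hrs : 2*r*s = 1 := by rw [hr]; field_simp
  have h4rs : 4*r^2*s^2 = 1 := by linear_combination (2*r*s + 1) * hrs
  have hone : d^2/4 + r^2 = 1 := by
    rw [hd2, hr]
    field_simp
    ring
  -- choose M and L
  have hb0 : (0:ℝ) < min (ε*d/(2*r)) d :=
    lt_min (div_pos (mul_pos hε hd0) (by linarith only [hr0])) hd0
  obtain ⟨N, hN⟩ := exists_nat_gt (1/(min (ε*d/(2*r)) d))
  obtain ⟨M, hMdef⟩ : ∃ M : ℕ, M = 2*(N+1) := ⟨_, rfl⟩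
  have hMeven : Even M := ⟨N+1, by omega⟩
  have hM0R : (0:ℝ) < (M:ℝ) := by
    rw [hMdef]; push_cast; positivity
  obtain ⟨L, hLdef⟩ : ∃ L : ℝ, L = 1/(M:ℝ) := ⟨_, rfl⟩
  have hL0 : 0 < L := by rw [hLdef]; exact div_pos one_pos hM0R
  have hML : (M:ℝ)*L = 1 := by rw [hLdef]; field_simp
  have hLb : L < min (ε*d/(2*r)) d := by
    have h1 : 1/(min (ε*d/(2*r)) d) < (M:ℝ) := by
      rw [hMdef]; push_cast
      linarith only [hN, Nat.cast_nonneg (α := ℝ) N]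
    have h2 := one_div_lt_one_div_of_lt (one_div_pos.mpr hb0) h1
    rw [one_div_one_div] at h2
    rw [hLdef]; exact h2
  have hLd : L < d := lt_of_lt_of_le hLb (min_le_right _ _)
  have hLr : L < ε*d/(2*r) := lt_of_lt_of_le hLb (min_le_left _ _)
  have h2rL : 2*r*L < ε*d := by
    rw [lt_div_iff₀ (by linarith only [hr0])] at hLr
    linarith only [hLr]
  -- v, u
  obtain ⟨v, hv⟩ : ∃ v : ℝ, v = L/d := ⟨_, rfl⟩
  have hv0 : 0 < v := by rw [hv]; exact div_pos hL0 hd0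
  have hv1 : v < 1 := by rw [hv, div_lt_one hd0]; exact hLd
  have hdv : d*v = L := by rw [hv]; field_simp
  obtain ⟨u, hu⟩ : ∃ u : ℝ, u = Real.sqrt (1 - v^2) := ⟨_, rfl⟩
  have hu0 : 0 ≤ u := by rw [hu]; positivity
  have huv : u^2 + v^2 = 1 := by
    rw [hu, Real.sq_sqrt (by nlinarith only [hv0, hv1])]; ring
  have hu1 : u ≤ 1 := by nlinarith only [hu0, huv, sq_nonneg v]
  have hdu : d*u ≤ ε := by nlinarith only [hu1, hu0, hdε, hd0]
  have hdu0 : (0:ℝ) ≤ d*u := mul_nonneg hd0.le hu0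
  have hrv : r*v ≤ ε/2 := by
    have h1 : r*v*d = r*L := by rw [hv]; field_simp
    nlinarith only [h2rL, h1, hd0]
  -- memberships
  have memw : ∀ j : ℕ,
      (slabPt ((j:ℝ)*L) 0 (ε/2 - (-1:ℝ)^j*(d*u)/2)) 2 ∈ Set.Icc (0:ℝ) ε := by
    intro j
    rw [slabPt_two]
    rcases Nat.even_or_odd j with h|h
    · rw [h.neg_one_pow]
      constructor
      · linarith only [hdu, hε]
      · linarith only [hdu0, hε]
    · rw [h.neg_one_pow]
      constructor
      · linarith only [hdu0, hε]
      · linarith only [hdu, hε]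
  have memX' : ∀ t : ℝ, (slabPt t 0 (ε/2 - d*u/2)) 2 ∈ Set.Icc (0:ℝ) ε := by
    intro t; rw [slabPt_two]
    constructor
    · linarith only [hdu, hε]
    · linarith only [hdu0, hε]
  have memY' : ∀ t : ℝ, (slabPt t 0 (ε/2 + d*u/2)) 2 ∈ Set.Icc (0:ℝ) ε := by
    intro t; rw [slabPt_two]
    constructor
    · linarith only [hdu0, hε]
    · linarith only [hdu, hε]
  -- the chain argument
  have hdiff : ∃ j : ℕ,
      c ⟨slabPt ((j:ℝ)*L) 0 (ε/2 - (-1:ℝ)^j*(d*u)/2), memw j⟩ ≠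
      c ⟨slabPt (((j+1:ℕ):ℝ)*L) 0 (ε/2 - (-1:ℝ)^(j+1)*(d*u)/2), memw (j+1)⟩ := by
    by_contra hall
    push_neg at hall
    have hiter : ∀ j : ℕ,
        c ⟨slabPt ((j:ℝ)*L) 0 (ε/2 - (-1:ℝ)^j*(d*u)/2), memw j⟩ =
        c ⟨slabPt (((0:ℕ):ℝ)*L) 0 (ε/2 - (-1:ℝ)^(0:ℕ)*(d*u)/2), memw 0⟩ := by
      intro j
      induction j with
      | zero => rfl
      | succ p ih => rw [← hall p]; exact ih
    refine hcontra ⟨_, memw 0⟩ ⟨_, memw M⟩ ?_ (hiter M).symm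
    show dist (slabPt (((0:ℕ):ℝ)*L) 0 (ε/2 - (-1:ℝ)^(0:ℕ)*(d*u)/2))
        (slabPt ((M:ℝ)*L) 0 (ε/2 - (-1:ℝ)^M*(d*u)/2)) = 1
    rw [dist_slabPt]
    apply my_sqrt_one
    rw [hMeven.neg_one_pow, pow_zero]
    push_cast
    linear_combination ((M:ℝ)*L + 1) * hML
  obtain ⟨j, hj⟩ := hdiff
  -- extract the pair in normalized form
  have hpair : ∃ t g : ℝ, (g = 1 ∨ g = -1) ∧
      c ⟨slabPt t 0 (ε/2 - d*u/2), memX' t⟩ ≠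
      c ⟨slabPt (t + g*(d*v)) 0 (ε/2 + d*u/2), memY' (t + g*(d*v))⟩ := by
    rcases Nat.even_or_odd j with h|h
    · refine ⟨(j:ℝ)*L, 1, Or.inl rfl, ?_⟩
      have e1 : (⟨slabPt ((j:ℝ)*L) 0 (ε/2 - (-1:ℝ)^j*(d*u)/2), memw j⟩ :
          {p : EuclideanSpace ℝ (Fin 3) // p 2 ∈ Set.Icc 0 ε}) =
          ⟨slabPt ((j:ℝ)*L) 0 (ε/2 - d*u/2), memX' _⟩ :=
        Subtype.ext (slabPt_congr rfl rfl (by rw [h.neg_one_pow]; ring))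
      have e2 : (⟨slabPt (((j+1:ℕ):ℝ)*L) 0 (ε/2 - (-1:ℝ)^(j+1)*(d*u)/2), memw (j+1)⟩ :
          {p : EuclideanSpace ℝ (Fin 3) // p 2 ∈ Set.Icc 0 ε}) =
          ⟨slabPt ((j:ℝ)*L + 1*(d*v)) 0 (ε/2 + d*u/2), memY' _⟩ :=
        Subtype.ext (slabPt_congr (by rw [hdv]; push_cast; ring) rfl
          (by rw [(h.add_one).neg_one_pow]; ring))
      rw [e1, e2] at hj
      exact hj
    · refine ⟨((j:ℝ)+1)*L, -1, Or.inr rfl, ?_⟩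
      have e1 : (⟨slabPt (((j+1:ℕ):ℝ)*L) 0 (ε/2 - (-1:ℝ)^(j+1)*(d*u)/2), memw (j+1)⟩ :
          {p : EuclideanSpace ℝ (Fin 3) // p 2 ∈ Set.Icc 0 ε}) =
          ⟨slabPt (((j:ℝ)+1)*L) 0 (ε/2 - d*u/2), memX' _⟩ :=
        Subtype.ext (slabPt_congr (by push_cast; ring) rfl
          (by rw [(h.add_one).neg_one_pow]; ring))
      have e2 : (⟨slabPt ((j:ℝ)*L) 0 (ε/2 - (-1:ℝ)^j*(d*u)/2), memw j⟩ :
          {p : EuclideanSpace ℝ (Fin 3) // p 2 ∈ Set.Icc 0 ε}) =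
          ⟨slabPt (((j:ℝ)+1)*L + (-1)*(d*v)) 0 (ε/2 + d*u/2), memY' _⟩ :=
        Subtype.ext (slabPt_congr (by rw [hdv]; ring) rfl
          (by rw [h.neg_one_pow]; ring))
      rw [e1, e2] at hj
      exact hj.symm
  obtain ⟨t, g, hg, hxy⟩ := hpair
  have hg2 : g^2 = 1 := by rcases hg with h|h <;> rw [h] <;> norm_num
  -- the angle
  obtain ⟨θ, hθ⟩ : ∃ x : ℝ, x = 2*θh := ⟨_, rfl⟩
  have hcosθ : Real.cos θ = 1 - 2*s^2 := by
    rw [hθ, Real.cos_two_mul, hs]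
    linear_combination 2*(Real.sin_sq_add_cos_sq θh)
  have hq0' : (q:ℝ) ≠ 0 := ne_of_gt hq0R
  have hqθ : (q:ℝ)*θ = (k:ℝ)*(2*π) := by
    rw [hθ, hθh]; field_simp
  have hcosq : Real.cos ((q:ℝ)*θ) = 1 := by
    rw [hqθ]; exact Real.cos_nat_mul_two_pi k
  have hsinq : Real.sin ((q:ℝ)*θ) = 0 := by
    rw [hqθ, show (k:ℝ)*(2*π) = ((2*k:ℕ):ℝ)*π by push_cast; ring]
    exact Real.sin_nat_mul_pi (2*k)
  -- the circle points
  have memP : ∀ i : ℕ,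
      (slabPt (t + g*(d*v/2) - g*(r*Real.cos ((i:ℝ)*θ)*u)) (r*Real.sin ((i:ℝ)*θ))
        (ε/2 + r*Real.cos ((i:ℝ)*θ)*v)) 2 ∈ Set.Icc (0:ℝ) ε := by
    intro i
    rw [slabPt_two]
    have hc1 : |Real.cos ((i:ℝ)*θ)| ≤ 1 := Real.abs_cos_le_one _
    rw [abs_le] at hc1
    have hb1 : r*Real.cos ((i:ℝ)*θ)*v ≤ r*v := by
      nlinarith only [hc1.2, mul_nonneg hr0.le hv0.le]
    have hb2 : -(r*v) ≤ r*Real.cos ((i:ℝ)*θ)*v := by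
      nlinarith only [hc1.1, mul_nonneg hr0.le hv0.le]
    constructor
    · linarith only [hb2, hrv]
    · linarith only [hb1, hrv]
  -- distances
  have hPx : ∀ i : ℕ,
      dist (slabPt (t + g*(d*v/2) - g*(r*Real.cos ((i:ℝ)*θ)*u)) (r*Real.sin ((i:ℝ)*θ))
        (ε/2 + r*Real.cos ((i:ℝ)*θ)*v)) (slabPt t 0 (ε/2 - d*u/2)) = 1 := by
    intro i
    rw [dist_slabPt]
    apply my_sqrt_one
    linear_combination ((d*v/2 - r*Real.cos ((i:ℝ)*θ)*u)^2) * hg2 +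
      (d^2/4 + r^2*Real.cos ((i:ℝ)*θ)^2) * huv +
      r^2 * (Real.sin_sq_add_cos_sq ((i:ℝ)*θ)) + hone
  have hPy : ∀ i : ℕ,
      dist (slabPt (t + g*(d*v/2) - g*(r*Real.cos ((i:ℝ)*θ)*u)) (r*Real.sin ((i:ℝ)*θ))
        (ε/2 + r*Real.cos ((i:ℝ)*θ)*v)) (slabPt (t + g*(d*v)) 0 (ε/2 + d*u/2)) = 1 := by
    intro i
    rw [dist_slabPt]
    apply my_sqrt_one
    linear_combination ((d*v/2 + r*Real.cos ((i:ℝ)*θ)*u)^2) * hg2 +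
      (d^2/4 + r^2*Real.cos ((i:ℝ)*θ)^2) * huv +
      r^2 * (Real.sin_sq_add_cos_sq ((i:ℝ)*θ)) + hone
  have hPP : ∀ i : ℕ,
      dist (slabPt (t + g*(d*v/2) - g*(r*Real.cos ((i:ℝ)*θ)*u)) (r*Real.sin ((i:ℝ)*θ))
        (ε/2 + r*Real.cos ((i:ℝ)*θ)*v))
        (slabPt (t + g*(d*v/2) - g*(r*Real.cos (((i+1:ℕ):ℝ)*θ)*u)) (r*Real.sin (((i+1:ℕ):ℝ)*θ))
        (ε/2 + r*Real.cos (((i+1:ℕ):ℝ)*θ)*v)) = 1 := by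
    intro i
    have hcossub : Real.cos ((i:ℝ)*θ)*Real.cos (((i:ℝ)+1)*θ) +
        Real.sin ((i:ℝ)*θ)*Real.sin (((i:ℝ)+1)*θ) = Real.cos θ := by
      rw [← Real.cos_sub, show (i:ℝ)*θ - ((i:ℝ)+1)*θ = -θ by ring, Real.cos_neg]
    rw [dist_slabPt]
    apply my_sqrt_one
    push_cast
    linear_combination (r^2*u^2*(Real.cos ((i:ℝ)*θ) - Real.cos (((i:ℝ)+1)*θ))^2) * hg2 +
      (r^2*(Real.cos ((i:ℝ)*θ) - Real.cos (((i:ℝ)+1)*θ))^2) * huv +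
      r^2 * (Real.sin_sq_add_cos_sq ((i:ℝ)*θ)) +
      r^2 * (Real.sin_sq_add_cos_sq (((i:ℝ)+1)*θ)) +
      (-2*r^2) * hcossub + (-2*r^2) * hcosθ + h4rs
  -- periodicity
  have hPq : c ⟨_, memP q⟩ = c ⟨_, memP 0⟩ := by
    apply congrArg c
    apply Subtype.ext
    apply slabPt_congr
    · rw [hcosq]; norm_num
    · rw [hsinq]; norm_num
    · rw [hcosq]; norm_num
  -- parity
  have hstep : ∀ i : ℕ, c ⟨_, memP (2*i)⟩ = c ⟨_, memP 0⟩ := by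
    intro i
    induction i with
    | zero => rfl
    | succ p ih =>
      have h1 : c ⟨_, memP (2*p)⟩ ≠ c ⟨_, memP (2*p+1)⟩ :=
        hcontra ⟨_, memP (2*p)⟩ ⟨_, memP (2*p+1)⟩ (hPP (2*p))
      have h2 : c ⟨_, memP (2*p+1)⟩ ≠ c ⟨_, memP (2*p+2)⟩ :=
        hcontra ⟨_, memP (2*p+1)⟩ ⟨_, memP (2*p+2)⟩ (hPP (2*p+1))
      have h3 := fin4_aux (c ⟨_, memX' t⟩) (c ⟨_, memY' (t + g*(d*v))⟩)
        (c ⟨_, memP (2*p)⟩) (c ⟨_, memP (2*p+1)⟩) (c ⟨_, memP (2*p+2)⟩)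
        hxy
        (hcontra ⟨_, memP (2*p)⟩ ⟨_, memX' t⟩ (hPx (2*p)))
        (hcontra ⟨_, memP (2*p)⟩ ⟨_, memY' _⟩ (hPy (2*p)))
        (hcontra ⟨_, memP (2*p+1)⟩ ⟨_, memX' t⟩ (hPx (2*p+1)))
        (hcontra ⟨_, memP (2*p+1)⟩ ⟨_, memY' _⟩ (hPy (2*p+1)))
        (hcontra ⟨_, memP (2*p+2)⟩ ⟨_, memX' t⟩ (hPx (2*p+2)))
        (hcontra ⟨_, memP (2*p+2)⟩ ⟨_, memY' _⟩ (hPy (2*p+2)))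
        h1 h2
      have e : 2*(p+1) = 2*p+2 := by ring
      rw [e, ← h3]
      exact ih
  -- finish
  have hlast : c ⟨_, memP (2*m)⟩ ≠ c ⟨_, memP (2*m+1)⟩ :=
    hcontra ⟨_, memP (2*m)⟩ ⟨_, memP (2*m+1)⟩ (hPP (2*m))
  have h2 : c ⟨_, memP (2*m)⟩ = c ⟨_, memP 0⟩ := hstep m
  rw [hm] at hPq
  exact hlast (by rw [h2, hPq])
end

section
/- Let C₁, …, C_m cover ℝⁿ with no C_i containing two points at distance exactly 1, and set C*_i to be the closure of the interior of the closure of C_i. Then the sets C*_1, …, C*_m also cover ℝⁿ. -/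
/-- If sets `C₁, …, C_m` cover `ℝⁿ` and no `C_i` contains two points at Euclidean
distance exactly 1, then the sets `C*_i := closure (interior (closure (C_i)))` also
cover `ℝⁿ`. -/
theorem stmt13 (n m : ℕ) (C : Fin m → Set (EuclideanSpace ℝ (Fin n)))
    (hcover : (⋃ i, C i) = Set.univ)
    (hdist : ∀ i, ∀ x ∈ C i, ∀ y ∈ C i, dist x y ≠ 1) :
    (⋃ i, closure (interior (closure (C i)))) = Set.univ := by
  have hclosed : ∀ i, IsClosed (closure (C i)) := fun i => isClosed_closure
  have hcov : (⋃ i, closure (C i)) = Set.univ := by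
    apply Set.eq_univ_of_univ_subset
    rw [← hcover]
    exact Set.iUnion_mono fun i => subset_closure
  have hdense : Dense (⋃ i, interior (closure (C i))) :=
    dense_iUnion_interior_of_closed hclosed hcov
  have hc2 : IsClosed (⋃ i, closure (interior (closure (C i)))) :=
    isClosed_iUnion_of_finite fun i => isClosed_closure
  apply Set.eq_univ_of_univ_subset
  have := hdense.closure_eq
  rw [← this]
  refine (closure_minimal ?_ hc2)
  exact Set.iUnion_mono fun i => subset_closure
end

section
/- For all sufficiently small rational ε > 0, the chromatic number of ℚ × ([0,ε] ∩ ℚ)³ with forbidden Euclidean distance 1 equals 3: a proper 3-coloring exists, and the unit-distance graph contains an odd cycle. -/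
/-- The Euclidean distance between two points of `ℚ⁴`. -/
noncomputable def qdist4 (p q : Fin 4 → ℚ) : ℝ :=
  Real.sqrt (∑ i, ((p i : ℝ) - (q i : ℝ)) ^ 2)

lemma qdist4_eq_one_iff (p q : Fin 4 → ℚ) :
    qdist4 p q = 1 ↔ ∑ i, (p i - q i) ^ 2 = 1 := by
  have h : (∑ i, ((p i : ℝ) - (q i : ℝ)) ^ 2) = ((∑ i, (p i - q i) ^ 2 : ℚ) : ℝ) := by
    push_cast; ring
  rw [qdist4, h, Real.sqrt_eq_one]
  exact_mod_cast Iff.rfl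

lemma aux_floor_mod3 (u v : ℚ) (h1 : 1 < |u - v|) (h2 : |u - v| ≤ 3/2) :
    ¬ ((3:ℤ) ∣ ⌊u⌋ - ⌊v⌋) := by
  intro hdvd
  have hu1 : (⌊u⌋ : ℚ) ≤ u := Int.floor_le u
  have hu2 : u < ⌊u⌋ + 1 := Int.lt_floor_add_one u
  have hv1 : (⌊v⌋ : ℚ) ≤ v := Int.floor_le v
  have hv2 : v < ⌊v⌋ + 1 := Int.lt_floor_add_one v
  rcases abs_cases (u - v) with ⟨he, _⟩ | ⟨he, _⟩ <;>
  · rw [he] at h1 h2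
    have hb1 : ((⌊u⌋ - ⌊v⌋ : ℤ) : ℚ) < 3 := by push_cast; linarith
    have hb2 : (-3 : ℚ) < ((⌊u⌋ - ⌊v⌋ : ℤ) : ℚ) := by push_cast; linarith
    have hne : ((⌊u⌋ - ⌊v⌋ : ℤ) : ℚ) ≠ 0 := by
      intro h0; push_cast at h0; linarith
    have hb1' : (⌊u⌋ - ⌊v⌋ : ℤ) < 3 := by exact_mod_cast hb1
    have hb2' : (-3 : ℤ) < ⌊u⌋ - ⌊v⌋ := by exact_mod_cast hb2
    have hne' : (⌊u⌋ - ⌊v⌋ : ℤ) ≠ 0 := by exact_mod_cast hne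
    omega

set_option maxHeartbeats 1000000 in
lemma aux_part1 (ε : ℚ) (hε0 : 0 < ε) (hε : ε < 1/3)
    (x y : Fin 4 → ℚ) (hx : ∀ i, i ≠ 0 → x i ∈ Set.Icc 0 ε)
    (hy : ∀ i, i ≠ 0 → y i ∈ Set.Icc 0 ε)
    (hd : ∑ i, (x i - y i) ^ 2 = 1) :
    ¬ ((3:ℤ) ∣ ⌊3 * x 0 / 2⌋ - ⌊3 * y 0 / 2⌋) := by
  rw [Fin.sum_univ_four] at hd
  obtain ⟨hx1a, hx1b⟩ := hx 1 (by decide)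
  obtain ⟨hx2a, hx2b⟩ := hx 2 (by decide)
  obtain ⟨hx3a, hx3b⟩ := hx 3 (by decide)
  obtain ⟨hy1a, hy1b⟩ := hy 1 (by decide)
  obtain ⟨hy2a, hy2b⟩ := hy 2 (by decide)
  obtain ⟨hy3a, hy3b⟩ := hy 3 (by decide)
  obtain ⟨d, hdef⟩ : ∃ d, d = x 0 - y 0 := ⟨_, rfl⟩
  rw [show x 0 - y 0 = d from hdef.symm] at hd
  have hsq1 : (x 1 - y 1) ^ 2 ≤ ε ^ 2 := by nlinarith
  have hsq2 : (x 2 - y 2) ^ 2 ≤ ε ^ 2 := by nlinarith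
  have hsq3 : (x 3 - y 3) ^ 2 ≤ ε ^ 2 := by nlinarith
  have hε2 : ε ^ 2 < 1/9 := by nlinarith
  have hd2 : 4/9 < d ^ 2 := by linarith
  have hd2' : d ^ 2 ≤ 1 := by
    nlinarith [sq_nonneg (x 1 - y 1), sq_nonneg (x 2 - y 2), sq_nonneg (x 3 - y 3)]
  have hsub : 3 * x 0 / 2 - 3 * y 0 / 2 = 3 * d / 2 := by rw [hdef]; ring
  have hq : (3 * d / 2) ^ 2 = 9 / 4 * d ^ 2 := by ring
  have hs : |3 * d / 2| ^ 2 = 9 / 4 * d ^ 2 := by rw [sq_abs]; exact hq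
  have hn : (0:ℚ) ≤ |3 * d / 2| := abs_nonneg _
  refine aux_floor_mod3 (3 * x 0 / 2) (3 * y 0 / 2) ?_ ?_
  · rw [hsub]; nlinarith
  · rw [hsub]; nlinarith

set_option maxHeartbeats 1000000 in
lemma aux_part2 (ε : ℚ) (hε0 : 0 < ε) (hε : ε < 1/3) :
    ∃ n : ℕ, Odd n ∧ ∃ f : ℕ → (Fin 4 → ℚ),
      (∀ i, ∀ j, j ≠ (0 : Fin 4) → f i j ∈ Set.Icc 0 ε) ∧
      (∀ i < n, ∑ k, (f i k - f (i + 1) k) ^ 2 = 1) ∧ f n = f 0 := by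
  obtain ⟨s, hs1, hs⟩ : ∃ s : ℕ, 1 ≤ s ∧ (1:ℚ) ≤ ε * s := by
    refine ⟨⌈(1:ℚ)/ε⌉₊, ?_, ?_⟩
    · exact Nat.one_le_ceil_iff.mpr (by positivity)
    · have h := Nat.le_ceil ((1:ℚ)/ε)
      rw [div_le_iff₀ hε0] at h
      linarith [h]
  have hscast : (1:ℚ) ≤ (s:ℚ) := by exact_mod_cast hs1
  set E : ℕ := s^2 + s + 1 with hEdef
  set m : ℚ := 2 * ((s:ℚ)^2 + s + 1) with hmdef
  have hm0 : 0 < m := by rw [hmdef]; positivity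
  have hmE : ((2*E : ℕ) : ℚ) = m := by rw [hEdef, hmdef]; push_cast; ring
  have hεm : (2*(s:ℚ)+1) ≤ ε * m := by
    have h1 : (2:ℚ)*s ≤ 2*s*(ε*s) := by nlinarith
    rw [hmdef]; nlinarith
  have hεm1 : (1:ℚ) ≤ ε * m := by nlinarith
  set X : ℕ → ℚ := fun i => if i ≤ 2*E then (i:ℚ)*(m-1)/m else (2*m - 1) - i with hXdef
  set Y : ℕ → ℚ := fun i => if i ≤ 2*E then ((i % 2 : ℕ):ℚ)/m else 0 with hYdef
  set T : ℕ → ℚ := fun i => if i ≤ 2*E then ((i % 2 : ℕ):ℚ)*(2*(s:ℚ)+1)/m else 0 with hTdef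
  have hXhigh : ∀ i, 2*E ≤ i → X i = (2*m - 1) - i := by
    intro i hi
    by_cases h : i ≤ 2*E
    · have hieq : i = 2*E := le_antisymm h hi
      rw [hXdef]; simp only [hieq, if_pos le_rfl, hmE]
      field_simp; ring
    · rw [hXdef]; simp only [if_neg h]
  have hYhigh : ∀ i, 2*E ≤ i → Y i = 0 := by
    intro i hi
    by_cases h : i ≤ 2*E
    · have hieq : i = 2*E := le_antisymm h hi
      rw [hYdef]; simp only [hieq, if_pos le_rfl, Nat.mul_mod_right]
      norm_num
    · rw [hYdef]; simp only [if_neg h]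
  have hThigh : ∀ i, 2*E ≤ i → T i = 0 := by
    intro i hi
    by_cases h : i ≤ 2*E
    · have hieq : i = 2*E := le_antisymm h hi
      rw [hTdef]; simp only [hieq, if_pos le_rfl, Nat.mul_mod_right]
      norm_num
    · rw [hTdef]; simp only [if_neg h]
  refine ⟨4*E - 1, by rw [Nat.odd_iff]; omega, fun i => ![X i, Y i, Y i, T i], ?_, ?_, ?_⟩
  · -- membership
    have hY : ∀ i, Y i ∈ Set.Icc 0 ε := by
      intro i
      rw [hYdef]
      by_cases h : i ≤ 2*E <;> simp only [if_pos, if_neg, h, if_true, if_false]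
      · have h1 : ((i % 2 : ℕ):ℚ) ≤ 1 := by
          exact_mod_cast Nat.le_of_lt_succ (Nat.mod_lt _ (by norm_num))
        have h0 : (0:ℚ) ≤ ((i % 2 : ℕ):ℚ) := by positivity
        constructor
        · positivity
        · rw [div_le_iff₀ hm0]; nlinarith
      · exact ⟨le_rfl, le_of_lt hε0⟩
    have hT : ∀ i, T i ∈ Set.Icc 0 ε := by
      intro i
      rw [hTdef]
      by_cases h : i ≤ 2*E <;> simp only [if_pos, if_neg, h, if_true, if_false]
      · have h1 : ((i % 2 : ℕ):ℚ) ≤ 1 := by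
          exact_mod_cast Nat.le_of_lt_succ (Nat.mod_lt _ (by norm_num))
        have h0 : (0:ℚ) ≤ ((i % 2 : ℕ):ℚ) := by positivity
        constructor
        · positivity
        · rw [div_le_iff₀ hm0]; nlinarith
      · exact ⟨le_rfl, le_of_lt hε0⟩
    intro i j hj
    fin_cases j
    · exact absurd rfl hj
    · exact hY i
    · exact hY i
    · exact hT i
  · -- edges
    intro i hi
    rw [Fin.sum_univ_four]
    simp only [Matrix.cons_val_zero, Matrix.cons_val_one, Matrix.head_cons,
      Matrix.cons_val_two, Matrix.tail_cons, Matrix.cons_val_three]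
    rcases lt_or_ge i (2*E) with hlow | hhigh
    · have hi1 : i ≤ 2*E := le_of_lt hlow
      have hi2 : i + 1 ≤ 2*E := hlow
      rw [hXdef, hYdef, hTdef]
      simp only [if_pos hi1, if_pos hi2]
      have hcast : ((i+1 : ℕ):ℚ) = (i:ℚ) + 1 := by push_cast; ring
      rcases Nat.even_or_odd i with he | ho
      · have e1 : i % 2 = 0 := Nat.even_iff.mp he
        have e2 : (i+1) % 2 = 1 := by omega
        rw [e1, e2, hcast]
        have hmne : m ≠ 0 := ne_of_gt hm0
        rw [hmdef] at hmne ⊢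
        field_simp
        ring
      · have e1 : i % 2 = 1 := Nat.odd_iff.mp ho
        have e2 : (i+1) % 2 = 0 := by omega
        rw [e1, e2, hcast]
        have hmne : m ≠ 0 := ne_of_gt hm0
        rw [hmdef] at hmne ⊢
        field_simp
        ring
    · have hi2 : 2*E ≤ i + 1 := by omega
      rw [hXhigh i hhigh, hXhigh (i+1) hi2, hYhigh i hhigh, hYhigh (i+1) hi2,
        hThigh i hhigh, hThigh (i+1) hi2]
      have hcast : ((i+1 : ℕ):ℚ) = (i:ℚ) + 1 := by push_cast; ring
      rw [hcast]
      ring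
  · -- closing
    have hn1 : 2*E ≤ 4*E - 1 := by omega
    have hncast : ((4*E - 1 : ℕ):ℚ) = 2*m - 1 := by
      rw [Nat.cast_sub (by omega)]
      push_cast [hEdef, hmdef]; ring
    funext j
    fin_cases j <;>
      simp only [Matrix.cons_val_zero, Matrix.cons_val_one, Matrix.head_cons,
        Matrix.cons_val_two, Matrix.tail_cons, Matrix.cons_val_three]
    · rw [hXhigh _ hn1, hncast]
      rw [hXdef]; simp only [Nat.zero_le, if_pos]
      norm_num
    · rw [hYhigh _ hn1, hYdef]; simp only [Nat.zero_le, if_pos]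
      norm_num
    · rw [hYhigh _ hn1, hYdef]; simp only [Nat.zero_le, if_pos]
      norm_num
    · rw [hThigh _ hn1, hTdef]; simp only [Nat.zero_le, if_pos]
      norm_num

lemma aux_part3 (ε : ℚ)
    (n : ℕ) (hodd : Odd n) (f : ℕ → (Fin 4 → ℚ))
    (hmem : ∀ i, ∀ j, j ≠ (0 : Fin 4) → f i j ∈ Set.Icc 0 ε)
    (hedge : ∀ i < n, qdist4 (f i) (f (i + 1)) = 1) (hclose : f n = f 0)
    (c : {p : Fin 4 → ℚ // ∀ i, i ≠ 0 → p i ∈ Set.Icc 0 ε} → Fin 2) :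
    ∃ x y : {p : Fin 4 → ℚ // ∀ i, i ≠ 0 → p i ∈ Set.Icc 0 ε},
      qdist4 x.1 y.1 = 1 ∧ c x = c y := by
  by_contra hcon
  push_neg at hcon
  set g : ℕ → ZMod 2 := fun i => c ⟨f i, fun j hj => hmem i j hj⟩ with hg
  have hstep : ∀ a b : ZMod 2, a ≠ b → b = a + 1 := by decide
  have key : ∀ i, i ≤ n → g i = g 0 + (i : ZMod 2) := by
    intro i
    induction i with
    | zero => intro _; simp
    | succ i ih =>
      intro h
      have hii : i ≤ n := by omega
      have hne : g i ≠ g (i+1) :=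
        hcon ⟨f i, fun j hj => hmem i j hj⟩ ⟨f (i+1), fun j hj => hmem (i+1) j hj⟩
          (hedge i (by omega))
      have := hstep _ _ hne
      rw [this, ih hii]
      push_cast
      ring
  have hgn : g n = g 0 := by
    rw [hg]
    simp only
    congr 1
    exact Subtype.ext hclose
  have hn1 : ((n : ℕ) : ZMod 2) = 1 := by
    obtain ⟨k, hk⟩ := hodd
    subst hk
    push_cast
    rw [show ((2:ZMod 2)) = 0 by decide]
    ring
  have := key n le_rfl
  rw [hgn, hn1] at this
  have habs : ∀ a : ZMod 2, a ≠ a + 1 := by decide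
  exact habs _ this

/-- For all sufficiently small rational `ε > 0`, the chromatic number of
`ℚ × ([0,ε] ∩ ℚ)³` with forbidden Euclidean distance 1 equals 3: a proper 3-coloring
exists, the unit-distance graph contains an odd cycle (an odd closed walk staying in the
slab), and hence no proper 2-coloring exists. -/
theorem stmt14 :
    ∃ ε₀ : ℚ, 0 < ε₀ ∧ ∀ ε : ℚ, 0 < ε → ε < ε₀ →
      (∃ c : {p : Fin 4 → ℚ // ∀ i, i ≠ 0 → p i ∈ Set.Icc 0 ε} → Fin 3,
        ∀ x y : {p : Fin 4 → ℚ // ∀ i, i ≠ 0 → p i ∈ Set.Icc 0 ε},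
          qdist4 x.1 y.1 = 1 → c x ≠ c y) ∧
      (∃ n : ℕ, Odd n ∧ ∃ f : ℕ → (Fin 4 → ℚ),
        (∀ i, ∀ j, j ≠ 0 → f i j ∈ Set.Icc 0 ε) ∧
        (∀ i < n, qdist4 (f i) (f (i + 1)) = 1) ∧ f n = f 0) ∧
      (∀ c : {p : Fin 4 → ℚ // ∀ i, i ≠ 0 → p i ∈ Set.Icc 0 ε} → Fin 2,
        ∃ x y : {p : Fin 4 → ℚ // ∀ i, i ≠ 0 → p i ∈ Set.Icc 0 ε},
          qdist4 x.1 y.1 = 1 ∧ c x = c y) := by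
  refine ⟨1/3, by norm_num, fun ε hε0 hε => ?_⟩
  obtain ⟨n, hodd, f, hmem, hedge', hclose⟩ := aux_part2 ε hε0 hε
  have hedge : ∀ i < n, qdist4 (f i) (f (i + 1)) = 1 := by
    intro i hi
    rw [qdist4_eq_one_iff]
    exact hedge' i hi
  refine ⟨?_, ⟨n, hodd, f, hmem, hedge, hclose⟩, fun c => aux_part3 ε n hodd f hmem hedge hclose c⟩
  refine ⟨fun p => ((⌊3 * p.1 0 / 2⌋ : ℤ) : ZMod 3), fun x y hxy hceq => ?_⟩
  have hd : ∑ i, (x.1 i - y.1 i) ^ 2 = 1 := (qdist4_eq_one_iff _ _).mp hxy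
  have hc : ((⌊3 * x.1 0 / 2⌋ : ℤ) : ZMod 3) = ((⌊3 * y.1 0 / 2⌋ : ℤ) : ZMod 3) := hceq
  rw [ZMod.intCast_eq_intCast_iff] at hc
  exact aux_part1 ε hε0 hε x.1 y.1 x.2 y.2 hd hc.symm.dvd
end

section
/- For every rational ε > 0, the unit-distance graph on ℚ × ([0,ε] ∩ ℚ)³ contains an odd cycle; hence it is not 2-colorable. Explicitly, for suitable even n > 2ε⁻² and integers b, c, d with b² + c² + d² = 2n − 1 (e.g., b = c = d = 2l+1, n = 6l² + 6l + 2), the unit vectors e = (1 − 1/n, b/n, c/n, d/n) and e' = (1 − 1/n, −b/n, −c/n, −d/n) generate a path from (0,0,0,0) to (n−1, 0, 0, 0) of length n, which together with n−1 unit steps along the x-axis forms an odd cycle. -/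
lemma qdist4_eq_one {p q : Fin 4 → ℚ} (h : ∑ i, (p i - q i)^2 = (1:ℚ)) :
    qdist4 p q = 1 := by
  unfold qdist4
  have h2 : (∑ i, ((p i : ℝ) - (q i : ℝ)) ^ 2) = ((∑ i, (p i - q i)^2 : ℚ) : ℝ) := by
    push_cast
    rfl
  rw [h2, h]
  simp

/-- For every rational `ε > 0`, the unit-distance graph on `ℚ × ([0,ε] ∩ ℚ)³` contains an
odd cycle (an odd closed walk along unit-distance steps staying in the slab); hence it is
not 2-colorable. -/
theorem stmt15 (ε : ℚ) (hε : 0 < ε) :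
    (∃ n : ℕ, Odd n ∧ ∃ f : ℕ → (Fin 4 → ℚ),
      (∀ i, ∀ j, j ≠ 0 → f i j ∈ Set.Icc 0 ε) ∧
      (∀ i < n, qdist4 (f i) (f (i + 1)) = 1) ∧ f n = f 0) ∧
    (∀ c : {p : Fin 4 → ℚ // ∀ i, i ≠ 0 → p i ∈ Set.Icc 0 ε} → Fin 2,
      ∃ x y : {p : Fin 4 → ℚ // ∀ i, i ≠ 0 → p i ∈ Set.Icc 0 ε},
        qdist4 x.1 y.1 = 1 ∧ c x = c y) := by
  obtain ⟨l, hl1, hlε⟩ : ∃ l : ℕ, 1 ≤ l ∧ ε⁻¹ ≤ (l:ℚ) := by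
    refine ⟨max 1 ⌈ε⁻¹⌉₊, le_max_left _ _, ?_⟩
    calc ε⁻¹ ≤ (⌈ε⁻¹⌉₊ : ℚ) := Nat.le_ceil _
    _ ≤ _ := by exact_mod_cast Nat.cast_le.mpr (le_max_right _ _)
  set n : ℕ := 6*l^2+6*l+2 with hn
  have hl0 : (0:ℚ) < l := by exact_mod_cast hl1
  have hn2 : 2 ≤ n := Nat.le_add_left 2 (6*l^2+6*l)
  have hn0 : (0:ℚ) < (n:ℚ) := by exact_mod_cast Nat.lt_of_lt_of_le (by norm_num) hn2
  have hne : (n:ℚ) ≠ 0 := ne_of_gt hn0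
  have hbε : (2*(l:ℚ)+1)/(n:ℚ) ≤ ε := by
    have h1 : (2*(l:ℚ)+1)/(n:ℚ) ≤ 1/(l:ℚ) := by
      rw [div_le_div_iff₀ hn0 hl0]
      have : ((n:ℚ)) = 6*(l:ℚ)^2+6*(l:ℚ)+2 := by rw [hn]; push_cast; ring
      rw [this]
      nlinarith
    have h2 : (1:ℚ)/(l:ℚ) ≤ ε := by
      rw [div_le_iff₀ hl0]
      calc (1:ℚ) = ε * ε⁻¹ := (mul_inv_cancel₀ (ne_of_gt hε)).symm
      _ ≤ ε * l := by nlinarith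
    linarith
  have hkey : ((n:ℚ)-1)^2 + 3*(2*(l:ℚ)+1)^2 = (n:ℚ)^2 := by
    have : ((n:ℚ)) = 6*(l:ℚ)^2+6*(l:ℚ)+2 := by rw [hn]; push_cast; ring
    rw [this]; ring
  have hneven : n % 2 = 0 := by omega
  set b : ℚ := 2*(l:ℚ)+1 with hb
  set x : ℕ → ℚ := fun i => if i ≤ n then (i:ℚ)*((n:ℚ)-1)/n else 2*(n:ℚ)-1-(i:ℚ) with hx
  set s : ℕ → ℚ := fun i => if i < n ∧ Odd i then b/n else 0 with hs
  set f : ℕ → (Fin 4 → ℚ) := fun i => ![x i, s i, s i, s i] with hf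
  have hs01 : ∀ i, s i ∈ Set.Icc (0:ℚ) ε := by
    intro i
    simp only [hs, Set.mem_Icc]
    split
    · exact ⟨by positivity, hbε⟩
    · exact ⟨le_refl 0, hε.le⟩
  have hmem : ∀ i, ∀ j : Fin 4, j ≠ 0 → f i j ∈ Set.Icc (0:ℚ) ε := by
    intro i j hj
    fin_cases j
    · exact absurd rfl hj
    all_goals simpa [hf] using hs01 i
  have hdist : ∀ i < 2*n-1, qdist4 (f i) (f (i+1)) = 1 := by
    intro i hi
    apply qdist4_eq_one
    rw [Fin.sum_univ_four]
    simp only [hf, Matrix.cons_val_zero, Matrix.cons_val_one, Matrix.head_cons,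
      Matrix.cons_val_two, Matrix.tail_cons, Matrix.cons_val_three]
    rcases lt_trichotomy i n with hin | rfl | hin
    · have hxd : x i - x (i+1) = -(((n:ℚ)-1)/n) := by
        simp only [hx]
        rw [if_pos hin.le, if_pos (by omega : i+1 ≤ n)]
        push_cast
        field_simp
        ring
      have hsd : (s i - s (i+1))^2 = (b/n)^2 := by
        rcases Nat.even_or_odd i with he | ho
        · have hi2 : i % 2 = 0 := Nat.even_iff.mp he
          have h1 : s i = 0 := by
            simp only [hs]; rw [if_neg]; rintro ⟨-, h⟩; rw [Nat.odd_iff] at h; omega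
          have h2 : s (i+1) = b/n := by
            simp only [hs]; rw [if_pos ⟨by omega, Nat.odd_iff.mpr (by omega)⟩]
          rw [h1, h2]; ring
        · have hi2 : i % 2 = 1 := Nat.odd_iff.mp ho
          have h1 : s i = b/n := by
            simp only [hs]; rw [if_pos ⟨hin, ho⟩]
          have h2 : s (i+1) = 0 := by
            simp only [hs]; rw [if_neg]; rintro ⟨-, h⟩; rw [Nat.odd_iff] at h; omega
          rw [h1, h2]; ring
      rw [hxd, hsd]
      field_simp
      linear_combination hkey
    · have hxd : x n - x (n+1) = 1 := by
        simp only [hx]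
        rw [if_pos (le_refl n), if_neg (by omega)]
        push_cast
        field_simp
        ring
      have h1 : s n = 0 := by simp only [hs]; rw [if_neg]; rintro ⟨h, -⟩; omega
      have h2 : s (n+1) = 0 := by simp only [hs]; rw [if_neg]; rintro ⟨h, -⟩; omega
      rw [hxd, h1, h2]; norm_num
    · have hxd : x i - x (i+1) = 1 := by
        simp only [hx]
        rw [if_neg (by omega), if_neg (by omega)]
        push_cast
        ring
      have h1 : s i = 0 := by simp only [hs]; rw [if_neg]; rintro ⟨h, -⟩; omega
      have h2 : s (i+1) = 0 := by simp only [hs]; rw [if_neg]; rintro ⟨h, -⟩; omega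
      rw [hxd, h1, h2]; norm_num
  have hclose : f (2*n-1) = f 0 := by
    have hx0 : x (2*n-1) = x 0 := by
      simp only [hx]
      rw [if_neg (by omega), if_pos (by omega : 0 ≤ n)]
      push_cast [Nat.cast_sub (by omega : 1 ≤ 2*n)]
      ring
    have hs0 : s (2*n-1) = s 0 := by
      simp only [hs]
      rw [if_neg (by rintro ⟨h, -⟩; omega), if_neg (by rintro ⟨-, h⟩; rw [Nat.odd_iff] at h; omega)]
    rw [hf]
    simp only [hx0, hs0]
  constructor
  · exact ⟨2*n-1, ⟨n-1, by omega⟩, f, hmem, hdist, hclose⟩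
  · intro c
    by_contra hcon
    push_neg at hcon
    have hstep : ∀ a b : Fin 2, a ≠ b → b = a + 1 := by decide
    open Fin.NatCast in
    have hind : ∀ i, i ≤ 2*n-1 →
        c ⟨f i, fun j hj => hmem i j hj⟩ = c ⟨f 0, fun j hj => hmem 0 j hj⟩ + (i : Fin 2) := by
      intro i
      induction i with
      | zero => intro _; simp
      | succ k ih =>
        intro hk
        have hd := hdist k (by omega)
        have hne := hcon ⟨f k, fun j hj => hmem k j hj⟩ ⟨f (k+1), fun j hj => hmem (k+1) j hj⟩ hd
        rw [hstep _ _ hne, ih (by omega)]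
        push_cast
        rw [add_assoc]
    have h1 := hind (2*n-1) le_rfl
    have hveq : (⟨f (2*n-1), fun j hj => hmem (2*n-1) j hj⟩ :
        {p : Fin 4 → ℚ // ∀ i, i ≠ 0 → p i ∈ Set.Icc 0 ε}) = ⟨f 0, fun j hj => hmem 0 j hj⟩ :=
      Subtype.ext hclose
    rw [hveq] at h1
    open Fin.NatCast in
    have hcast : ((2*n-1 : ℕ) : Fin 2) = 1 := by
      have h3 : 2*n-1 = 2*(n-1)+1 := by omega
      rw [h3]
      push_cast
      rw [Fin.natCast_eq_zero.mpr (dvd_mul_right 2 (n-1)), zero_add]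
    rw [hcast] at h1
    exact (by decide : ∀ a : Fin 2, a ≠ a + 1) _ h1
end

section
/- Let ε ∈ (0,1) and let Q ⊆ ℝ² be the open ε-neighborhood of a curve ξ (a continuous image of an interval) whose diameter is at least 2. Then the unit-distance graph on Q contains an odd cycle; consequently every proper coloring of Q with forbidden distance 1 uses at least 3 colors. -/
open Real
open scoped InnerProductSpace

local notation "E2" => EuclideanSpace ℝ (Fin 2)

noncomputable def Jm (v : E2) : E2 := !₂[-(v 1), v 0]

lemma inner_expand (x y : E2) : ⟪x, y⟫_ℝ = x 0 * y 0 + x 1 * y 1 := by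
  simp [PiLp.inner_apply, RCLike.inner_apply, Fin.sum_univ_two, mul_comm]

lemma Jm_apply0 (v : E2) : Jm v 0 = -(v 1) := rfl
lemma Jm_apply1 (v : E2) : Jm v 1 = v 0 := rfl

lemma inner_Jm (v : E2) : ⟪v, Jm v⟫_ℝ = 0 := by
  simp [inner_expand, Jm_apply0, Jm_apply1]; ring

lemma inner_Jm_Jm (v w : E2) : ⟪Jm v, Jm w⟫_ℝ = ⟪v, w⟫_ℝ := by
  simp [inner_expand, Jm_apply0, Jm_apply1]; ring

lemma norm_sq_eq (v : E2) : ‖v‖^2 = ⟪v, v⟫_ℝ := by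
  rw [real_inner_self_eq_norm_sq]

lemma decomp (u : E2) (hu : ‖u‖ = 1) (w : E2) :
    w = ⟪w, u⟫_ℝ • u + ⟪w, Jm u⟫_ℝ • Jm u := by
  have h : u 0 ^ 2 + u 1 ^ 2 = 1 := by
    have := norm_sq_eq u; rw [hu, inner_expand] at this; nlinarith [this]
  ext i
  fin_cases i <;>
    simp only [Fin.mk_zero, Fin.mk_one, Fin.isValue, inner_expand, Jm_apply0, Jm_apply1, PiLp.add_apply, PiLp.smul_apply, smul_eq_mul]
  · linear_combination (-(w 0)) * h
  · linear_combination (-(w 1)) * h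

lemma norm_comb (u : E2) (hu : ‖u‖ = 1) (x y : ℝ) :
    ‖x • u + y • Jm u‖^2 = x^2 + y^2 := by
  have h1 : ⟪u, Jm u⟫_ℝ = 0 := inner_Jm u
  have h2 : ‖Jm u‖^2 = 1 := by
    rw [norm_sq_eq, inner_Jm_Jm, ← norm_sq_eq, hu]; norm_num
  rw [norm_add_sq_real]
  rw [norm_smul, norm_smul, real_inner_smul_left, real_inner_smul_right, h1]
  simp [norm_eq_abs]
  rw [mul_pow, mul_pow, h2, sq_abs, sq_abs, hu]; ring


private lemma L_e2 (r η : ℝ) (hrl : 1 - η ≤ r) (hrr : r ≤ 1 + η) (hr0 : 0 ≤ r)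
    (hη1 : η ≤ 1) : (r^2 - 1)^2 ≤ 9*η^2 := by
  have h1 : (r-1)^2 ≤ η^2 := by
    nlinarith [mul_nonneg (by linarith : (0:ℝ) ≤ η - (r-1)) (by linarith : (0:ℝ) ≤ η + (r-1))]
  have h2 : (r+1)^2 ≤ 9 := by
    nlinarith [mul_nonneg (by linarith : (0:ℝ) ≤ 2 - r) (by linarith : (0:ℝ) ≤ 4 + r)]
  calc (r^2-1)^2 = (r-1)^2*(r+1)^2 := by ring
    _ ≤ η^2*9 := mul_le_mul h1 h2 (sq_nonneg _) (sq_nonneg _)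
    _ = 9*η^2 := by ring

private lemma L_e3' (X d η d₀ : ℝ) (h1 : (2*d*X)^2 ≤ 9*η^2) (hd : d₀/2 ≤ d)
    (hd₀ : 0 < d₀) : X^2 ≤ 9*η^2/d₀^2 := by
  rw [le_div_iff₀ (by positivity)]
  nlinarith [mul_nonneg (sq_nonneg X) (mul_nonneg (by linarith : (0:ℝ) ≤ 2*d - d₀) (by linarith : (0:ℝ) ≤ 2*d + d₀))]

private lemma L_e7 (h B2 c : ℝ) (hh : 0 ≤ h) (hh34 : 3/4 ≤ h^2) (hB : 0 ≤ B2)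
    (he5 : (h^2 - B2^2)^2 ≤ c) : (h - B2)^2 ≤ (4/3)*c := by
  have key : (h - B2)^2 * (h + B2)^2 = (h^2 - B2^2)^2 := by ring
  have k1 : 3/4 ≤ (h+B2)^2 := by nlinarith [mul_nonneg hh hB, sq_nonneg B2]
  have k2 := mul_le_mul_of_nonneg_left k1 (sq_nonneg (h - B2))
  rw [key] at k2
  linarith

private lemma L_sq32 (x : ℝ) (h1 : -(3/2) ≤ x) (h2 : x ≤ 3/2) : x^2 ≤ 9/4 := by
  nlinarith [mul_nonneg (by linarith : (0:ℝ) ≤ 3/2 - x) (by linarith : (0:ℝ) ≤ 3/2 + x)]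

lemma numeric (ε d₀ η d r A B h σ : ℝ)
    (hηdef : η = ε^2*d₀^2/64)
    (hε : 0 < ε) (hε1 : ε < 1) (hd₀ : 0 < d₀) (hd₀2 : d₀ ≤ 1/2)
    (habs : |r - 1| ≤ η) (hr0 : 0 ≤ r)
    (hd1 : d₀/2 ≤ d) (hd2 : d ≤ d₀ + η)
    (hrel : r^2 = 1 - 2*A*d + d^2)
    (hab : A^2 + B^2 = 1)
    (hh2 : h^2 = 1 - d^2/4) (hh0 : 0 ≤ h)
    (hσ2 : σ^2 = 1) (hσB : σ * B = |B|) :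
    (d/2 - A)^2 + (σ*h - B)^2 < ε^2 := by
  have hε2 : ε^2 ≤ 1 := by
    have := mul_le_one₀ hε1.le hε.le hε1.le
    calc ε^2 = ε * ε := sq ε
      _ ≤ 1 := this
  have hd₀1 : d₀ ≤ 1 := by linarith
  have hd₀sq : d₀^2 ≤ 1/4 := by
    have := pow_le_pow_left₀ hd₀.le hd₀2 2
    calc d₀^2 ≤ (1/2:ℝ)^2 := this
      _ = 1/4 := by norm_num
  have hx1 : ε^2*d₀^2 ≤ d₀^2 := mul_le_of_le_one_left (sq_nonneg d₀) hε2
  have hd₀sqs : d₀^2 ≤ d₀ := by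
    have := mul_le_of_le_one_left hd₀.le hd₀1
    calc d₀^2 = d₀ * d₀ := sq d₀
      _ ≤ d₀ := this
  have hεd2 : ε^2*d₀^2 ≤ d₀ := le_trans hx1 hd₀sqs
  have hεd1 : ε^2*d₀^2 ≤ 1 := by linarith
  have hηpos : 0 < η := by rw [hηdef]; positivity
  have hηd : η ≤ d₀/2 := by rw [hηdef]; linarith
  have hηsm : η ≤ 1/128 := by rw [hηdef]; linarith
  have hd0 : 0 < d := by linarith
  have hdle1 : d ≤ 1 := by linarith
  have hdsq : d^2 ≤ 1 := by
    have h0 : 0 ≤ d := hd0.le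
    have := mul_le_one₀ hdle1 h0 hdle1
    calc d^2 = d*d := sq d
      _ ≤ 1 := this
  have hh34 : 3/4 ≤ h^2 := by linarith
  obtain ⟨hrl, hrr⟩ := abs_le.mp habs
  have e2 : (r^2-1)^2 ≤ 9*η^2 := L_e2 r η (by linarith) (by linarith) hr0 (by linarith)
  have e3 : 2*d*(d/2 - A) = r^2 - 1 := by linear_combination -hrel
  have e3' : (d/2 - A)^2 ≤ 9*η^2/d₀^2 := by
    apply L_e3' _ d _ _ _ hd1 hd₀
    calc (2*d*(d/2-A))^2 = (r^2-1)^2 := by rw [e3]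
      _ ≤ 9*η^2 := e2
  have e4 : A^2 ≤ 1 := by linarith [sq_nonneg B]
  have hAabs : |A| ≤ 1 := (sq_le_one_iff_abs_le_one A).mp e4
  obtain ⟨hA2, hA1⟩ := abs_le.mp hAabs
  have e5 : (h^2 - |B|^2)^2 ≤ (81/4)*(η^2/d₀^2) := by
    have hBB : |B|^2 = B^2 := sq_abs B
    have h1 : h^2 - |B|^2 = (A - d/2)*(A + d/2) := by
      rw [hBB]; linear_combination hh2 - hab
    have h2 : (A + d/2)^2 ≤ 9/4 := L_sq32 (A + d/2) (by linarith) (by linarith)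
    have h3 : (A - d/2)^2 ≤ 9*η^2/d₀^2 := by
      have e : (A - d/2)^2 = (d/2 - A)^2 := by ring
      rw [e]; exact e3'
    calc (h^2 - |B|^2)^2 = (A - d/2)^2 * (A+d/2)^2 := by rw [h1]; ring
      _ ≤ (9*η^2/d₀^2) * (9/4) := mul_le_mul h3 h2 (sq_nonneg _) (by positivity)
      _ = (81/4)*(η^2/d₀^2) := by ring
  have e7 : (h - |B|)^2 ≤ (4/3)*((81/4)*(η^2/d₀^2)) :=
    L_e7 h |B| _ hh0 hh34 (abs_nonneg B) e5
  have e7' : (h - |B|)^2 ≤ 27*(η^2/d₀^2) := by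
    have : (4/3)*((81/4)*(η^2/d₀^2)) = 27*(η^2/d₀^2) := by ring
    linarith
  have hησ : η^2/d₀^2 ≤ ε^2/4096 := by
    have hform : η^2/d₀^2 = (ε^2*d₀^2)*ε^2/4096 := by
      rw [hηdef]; field_simp; ring
    rw [hform]
    have := mul_le_of_le_one_left (sq_nonneg ε) hεd1
    linarith
  have hsb : (σ*h - B)^2 = (h - |B|)^2 := by
    have hBB : |B|^2 = B^2 := sq_abs B
    have e : (σ*h - B)^2 = σ^2*h^2 - 2*h*(σ*B) + B^2 := by ring
    rw [e, hσ2, hσB]; linear_combination -hBB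
  rw [hsb]
  have e3'' : (d/2 - A)^2 ≤ 9*(η^2/d₀^2) := by
    have : 9*η^2/d₀^2 = 9*(η^2/d₀^2) := by ring
    linarith
  have hεsq : 0 < ε^2 := by positivity
  linarith


lemma norm_eq_one_of_sq (w : E2) (h : ‖w‖^2 = 1) : ‖w‖ = 1 := by
  nlinarith [norm_nonneg w]

private lemma lt_of_sq_lt' (x ε : ℝ) (h : x^2 < ε^2) (hx : 0 ≤ x) (hε : 0 < ε) : x < ε := by
  nlinarith

set_option maxHeartbeats 1000000 in
lemma circles (ε d₀ : ℝ) (hε : 0 < ε) (hε1 : ε < 1) (hd₀ : 0 < d₀) (hd₀2 : d₀ ≤ 1/2)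
    (p q z₀ : E2) (hz₀ : dist z₀ p = 1)
    (hr : |dist z₀ q - 1| ≤ ε^2*d₀^2/64)
    (hd1 : d₀/2 ≤ dist q p) (hd2 : dist q p ≤ d₀ + ε^2*d₀^2/64) :
    ∃ z : E2, dist z p = 1 ∧ dist z q = 1 ∧ dist z z₀ < ε := by
  have hηpos : 0 < ε^2*d₀^2/64 := by positivity
  have hηd : ε^2*d₀^2/64 ≤ d₀/2 := by
    have hε2 : ε^2 ≤ 1 := by
      have := mul_le_one₀ hε1.le hε.le hε1.le
      calc ε^2 = ε * ε := sq ε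
        _ ≤ 1 := this
    have hx1 : ε^2*d₀^2 ≤ d₀^2 := mul_le_of_le_one_left (sq_nonneg d₀) hε2
    nlinarith [sq_nonneg d₀, hd₀.le, hd₀2]
  set d := dist q p with hddef
  have hd0 : 0 < d := lt_of_lt_of_le (by linarith) hd1
  have hdle1 : d ≤ 1 := by nlinarith
  set u : E2 := d⁻¹ • (q - p) with hudef
  have hqp : ‖q - p‖ = d := (dist_eq_norm q p).symm
  have hnu : ‖u‖ = 1 := by
    rw [hudef, norm_smul, norm_inv, Real.norm_eq_abs, abs_of_pos hd0, hqp]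
    field_simp
  have hqpu : q - p = d • u := by
    rw [hudef, smul_smul, mul_inv_cancel₀ hd0.ne', one_smul]
  set A := ⟪z₀ - p, u⟫_ℝ with hAdef
  set B := ⟪z₀ - p, Jm u⟫_ℝ with hBdef
  have hz₀p : z₀ - p = A • u + B • Jm u := decomp u hnu (z₀ - p)
  have hab : A^2 + B^2 = 1 := by
    have h1 : ‖z₀ - p‖^2 = 1 := by rw [← dist_eq_norm, hz₀]; norm_num
    rw [hz₀p, norm_comb u hnu] at h1; exact h1
  have hone : (0:ℝ) ≤ 1 - d^2/4 := by nlinarith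
  set h := Real.sqrt (1 - d^2/4) with hhdef
  have hh2 : h^2 = 1 - d^2/4 := Real.sq_sqrt hone
  have hh0 : 0 ≤ h := Real.sqrt_nonneg _
  set σ : ℝ := if 0 ≤ B then 1 else -1 with hσdef
  have hσ2 : σ^2 = 1 := by rw [hσdef]; split_ifs <;> norm_num
  have hσB : σ * B = |B| := by
    rw [hσdef]; split_ifs with hB
    · rw [abs_of_nonneg hB]; ring
    · rw [abs_of_neg (not_le.mp hB)]; ring
  set w1 : E2 := (d/2) • u + (σ*h) • Jm u with hw1def
  have hrel : (dist z₀ q)^2 = 1 - 2*A*d + d^2 := by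
    have h1 : z₀ - q = (A - d) • u + B • Jm u := by
      have e : z₀ - q = (z₀ - p) - (q - p) := by abel
      rw [e, hz₀p, hqpu]; module
    have h2 : (dist z₀ q)^2 = (A - d)^2 + B^2 := by
      rw [dist_eq_norm, h1, norm_comb u hnu]
    linear_combination h2 + hab
  refine ⟨p + w1, ?_, ?_, ?_⟩
  · rw [dist_eq_norm, add_sub_cancel_left]
    apply norm_eq_one_of_sq
    rw [hw1def, norm_comb u hnu]
    linear_combination hh2 + h^2 * hσ2
  · rw [dist_eq_norm]
    have e : p + w1 - q = (d/2 - d) • u + (σ*h) • Jm u := by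
      have e1 : p + w1 - q = w1 - (q - p) := by abel
      rw [e1, hqpu, hw1def]; module
    rw [e]
    apply norm_eq_one_of_sq
    rw [norm_comb u hnu]
    linear_combination hh2 + h^2 * hσ2
  · have hzz : p + w1 - z₀ = (d/2 - A) • u + (σ*h - B) • Jm u := by
      have e1 : p + w1 - z₀ = w1 - (z₀ - p) := by abel
      rw [e1, hz₀p, hw1def]; module
    rw [dist_eq_norm, hzz]
    have key := numeric ε d₀ (ε^2*d₀^2/64) d (dist z₀ q) A B h σ rfl hε hε1 hd₀ hd₀2
      hr dist_nonneg hd1 hd2 hrel hab hh2 hh0 hσ2 hσB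
    apply lt_of_sq_lt' _ _ _ (norm_nonneg _) hε
    rw [norm_comb u hnu]
    exact key

lemma unit_nbr (a b : ℝ) (γ : ℝ → E2) (hγ : ContinuousOn γ (Set.Icc a b))
    (ξ : Set E2) (hξ : ξ = γ '' Set.Icc a b) (hdiam : 2 ≤ Metric.diam ξ)
    (x : E2) (p : E2) (hp : p ∈ ξ) (hxp : dist x p < 1) :
    ∃ w ∈ ξ, dist x w = 1 := by
  have hcomp : IsCompact ξ := hξ ▸ (isCompact_Icc.image_of_continuousOn hγ)
  have hcont : ContinuousOn (fun w => dist x w) ξ :=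
    (continuous_const.dist continuous_id).continuousOn
  obtain ⟨q, hq, hqmax'⟩ := hcomp.exists_isMaxOn ⟨p, hp⟩ hcont
  have hqmax : ∀ u ∈ ξ, dist x u ≤ dist x q := fun u hu => hqmax' hu
  have hq1 : 1 ≤ dist x q := by
    by_contra hlt
    push_neg at hlt
    have hd : Metric.diam ξ ≤ 2 * dist x q := by
      apply Metric.diam_le_of_forall_dist_le (by positivity)
      intro u hu v hv
      calc dist u v ≤ dist u x + dist x v := dist_triangle u x v
        _ = dist x u + dist x v := by rw [dist_comm u x]
        _ ≤ dist x q + dist x q := add_le_add (hqmax u hu) (hqmax v hv)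
        _ = 2 * dist x q := by ring
    linarith
  rw [hξ] at hp hq
  obtain ⟨sp, hsp, rfl⟩ := hp
  obtain ⟨sq, hsq, rfl⟩ := hq
  have hsub : Set.uIcc sp sq ⊆ Set.Icc a b := Set.uIcc_subset_Icc hsp hsq
  have hcg : ContinuousOn (fun r => dist x (γ r)) (Set.uIcc sp sq) :=
    (continuous_const.dist continuous_id).comp_continuousOn (hγ.mono hsub)
  have h1mem : (1:ℝ) ∈ Set.uIcc (dist x (γ sp)) (dist x (γ sq)) :=
    Set.mem_uIcc.mpr (Or.inl ⟨hxp.le, hq1⟩)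
  obtain ⟨r, hr, hgr⟩ := intermediate_value_uIcc hcg h1mem
  exact ⟨γ r, hξ ▸ ⟨r, hsub hr, rfl⟩, hgr⟩

set_option maxHeartbeats 1000000 in
lemma local4 (ε a b : ℝ) (hε0 : 0 < ε) (hε1 : ε < 1) (γ : ℝ → E2)
    (hγ : ContinuousOn γ (Set.Icc a b))
    (ξ : Set E2) (hξ : ξ = γ '' Set.Icc a b) (hdiam : 2 ≤ Metric.diam ξ)
    (Q : Set E2) (hQ : Q = {x | ∃ y ∈ ξ, dist x y < ε})
    (x : E2) (hx : x ∈ Q) :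
    ∃ η > 0, ∀ x' ∈ Q, dist x' x < η →
      ∃ z₀ y z : E2, z₀ ∈ Q ∧ y ∈ Q ∧ z ∈ Q ∧
        dist x z₀ = 1 ∧ dist z₀ y = 1 ∧ dist y z = 1 ∧ dist z x' = 1 := by
  have hξQ : ξ ⊆ Q := by
    intro w hw
    rw [hQ]
    exact ⟨w, hw, by simpa [dist_self] using hε0⟩
  obtain ⟨p, hpξ, hxp⟩ : ∃ p ∈ ξ, dist x p < ε := by rw [hQ] at hx; exact hx
  obtain ⟨z₀, hz₀ξ, hxz₀⟩ := unit_nbr a b γ hγ ξ hξ hdiam x p hpξ (lt_trans hxp hε1)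
  have hρpos : 0 < ε - dist x p := by linarith
  have ballQ : ∀ w : E2, dist w x < ε - dist x p → w ∈ Q := by
    intro w hw
    rw [hQ]
    refine ⟨p, hpξ, ?_⟩
    calc dist w p ≤ dist w x + dist x p := dist_triangle w x p
      _ < ε := by linarith
  set α := min ε (ε - dist x p) / 2 with hαdef
  have hαpos : 0 < α := by positivity
  have hαε : α ≤ ε/2 := by
    have := min_le_left ε (ε - dist x p); simp only [hαdef]; linarith
  have hαρ : α ≤ (ε - dist x p)/2 := by
    have := min_le_right ε (ε - dist x p); simp only [hαdef]; linarith
  have hv : ‖x - z₀‖ = 1 := by rw [← dist_eq_norm]; exact hxz₀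
  set v := x - z₀ with hvdef
  set y := z₀ + (Real.cos α • v + Real.sin α • Jm v) with hydef
  have hyz₀ : dist y z₀ = 1 := by
    rw [dist_eq_norm, hydef, add_sub_cancel_left]
    apply norm_eq_one_of_sq
    rw [norm_comb v hv]
    linear_combination Real.sin_sq_add_cos_sq α
  have hyx : y - x = (Real.cos α - 1) • v + Real.sin α • Jm v := by
    have e1 : y - x = (Real.cos α • v + Real.sin α • Jm v) - (x - z₀) := by
      rw [hydef]; abel
    rw [e1, ← hvdef]; module
  have hd₀sq : (dist y x)^2 = 2 - 2*Real.cos α := by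
    rw [dist_eq_norm, hyx, norm_comb v hv]
    linear_combination Real.sin_sq_add_cos_sq α
  set s := Real.sin (α/2) with hsdef
  have hspos : 0 < s := by
    apply Real.sin_pos_of_pos_of_lt_pi (by positivity)
    nlinarith [Real.pi_gt_three, hαε, hε1]
  have hcos : Real.cos α = 1 - 2*s^2 := by
    have h2 : Real.cos (2*(α/2)) = 2 * Real.cos (α/2)^2 - 1 := Real.cos_two_mul (α/2)
    have h3 : (2:ℝ)*(α/2) = α := by ring
    rw [h3] at h2
    have h4 := Real.sin_sq_add_cos_sq (α/2)
    rw [hsdef]; linear_combination h2 + 2*h4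
  have hd₀eq : dist y x = 2*s := by
    have h4 : (dist y x)^2 = (2*s)^2 := by rw [hd₀sq, hcos]; ring
    calc dist y x = Real.sqrt ((dist y x)^2) := (Real.sqrt_sq dist_nonneg).symm
      _ = Real.sqrt ((2*s)^2) := by rw [h4]
      _ = 2*s := Real.sqrt_sq (by positivity)
  have hd₀pos : 0 < dist y x := by rw [hd₀eq]; positivity
  have hslt : s < α/2 := Real.sin_lt (by positivity)
  have hd₀α : dist y x < α := by rw [hd₀eq]; linarith
  have hyQ : y ∈ Q := ballQ y (by linarith)
  have hd₀half : dist y x ≤ 1/2 := by linarith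
  set d₀ := dist y x with hd₀def
  set η := ε^2*d₀^2/64 with hηdef
  have hηpos : 0 < η := by positivity
  have hε2 : ε^2 ≤ 1 := by
    have := mul_le_one₀ hε1.le hε0.le hε1.le
    calc ε^2 = ε * ε := sq ε
      _ ≤ 1 := this
  have hηd₀ : η ≤ d₀/2 := by
    have h1 : ε^2*d₀^2 ≤ d₀^2 := mul_le_of_le_one_left (sq_nonneg _) hε2
    have h2 : d₀*d₀ ≤ d₀*(1/2) := mul_le_mul_of_nonneg_left hd₀half hd₀pos.le
    have h3 : d₀^2 = d₀*d₀ := sq d₀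
    rw [hηdef]; linarith
  refine ⟨η, hηpos, ?_⟩
  intro x' hx'Q hx'd
  have harg1 : dist z₀ y = 1 := by rw [dist_comm]; exact hyz₀
  have harg2 : |dist z₀ x' - 1| ≤ η := by
    have t1 : dist z₀ x' ≤ dist z₀ x + dist x x' := dist_triangle z₀ x x'
    have t2 : dist z₀ x ≤ dist z₀ x' + dist x' x := dist_triangle z₀ x' x
    have t3 : dist z₀ x = 1 := by rw [dist_comm]; exact hxz₀
    have t4 : dist x x' = dist x' x := dist_comm x x'
    rw [abs_le]; constructor <;> linarith
  have harg3 : d₀/2 ≤ dist x' y := by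
    have t1 : dist y x ≤ dist y x' + dist x' x := dist_triangle y x' x
    have t2 : dist y x' = dist x' y := dist_comm y x'
    linarith
  have harg4 : dist x' y ≤ d₀ + η := by
    have t1 : dist x' y ≤ dist x' x + dist x y := dist_triangle x' x y
    have t2 : dist x y = d₀ := dist_comm y x ▸ rfl
    linarith
  obtain ⟨z, hzy, hzx', hzz₀⟩ :=
    circles ε d₀ hε0 hε1 hd₀pos hd₀half y x' z₀ harg1 harg2 harg3 harg4
  have hzQ : z ∈ Q := by rw [hQ]; exact ⟨z₀, hz₀ξ, hzz₀⟩
  exact ⟨z₀, y, z, hξQ hz₀ξ, hyQ, hzQ, hxz₀, harg1,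
    by rw [dist_comm]; exact hzy, hzx'⟩

def walkset (Q : Set E2) (x₀ : E2) : Set E2 :=
  {x | ∃ m : ℕ, ∃ f : ℕ → E2, f 0 = x₀ ∧ f (2*m) = x ∧
    (∀ i ≤ 2*m, f i ∈ Q) ∧ (∀ i < 2*m, dist (f i) (f (i+1)) = 1)}

lemma walkset_self (Q : Set E2) (x₀ : E2) (h : x₀ ∈ Q) : x₀ ∈ walkset Q x₀ := by
  refine ⟨0, fun _ => x₀, rfl, rfl, fun i _ => h, fun i hi => absurd hi (by omega)⟩

lemma walk_extend (Q : Set E2) (x₀ x x' z₀ y z : E2)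
    (hx : x ∈ walkset Q x₀) (hz₀Q : z₀ ∈ Q) (hyQ : y ∈ Q) (hzQ : z ∈ Q) (hx'Q : x' ∈ Q)
    (h1 : dist x z₀ = 1) (h2 : dist z₀ y = 1) (h3 : dist y z = 1) (h4 : dist z x' = 1) :
    x' ∈ walkset Q x₀ := by
  obtain ⟨m, f, hf0, hfm, hfQ, hfd⟩ := hx
  refine ⟨m+2, fun i => if i ≤ 2*m then f i else if i = 2*m+1 then z₀
    else if i = 2*m+2 then y else if i = 2*m+3 then z else x', ?_, ?_, ?_, ?_⟩
  · simpa [Nat.zero_le] using hf0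
  · dsimp only; split_ifs <;> first | omega | rfl
  · intro i _
    dsimp only
    split_ifs with c1 c2 c3 c4
    · exact hfQ i c1
    · exact hz₀Q
    · exact hyQ
    · exact hzQ
    · exact hx'Q
  · intro i hi
    dsimp only
    by_cases hc : i < 2*m
    · rw [if_pos (by omega : i ≤ 2*m), if_pos (by omega : i+1 ≤ 2*m)]
      exact hfd i hc
    · have hcase : i = 2*m ∨ i = 2*m+1 ∨ i = 2*m+2 ∨ i = 2*m+3 := by omega
      rcases hcase with rfl | rfl | rfl | rfl
      · split_ifs <;> first | omega | (rw [hfm]; exact h1)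
      · split_ifs <;> first | omega | exact h2
      · split_ifs <;> first | omega | exact h3
      · split_ifs <;> first | omega | exact h4

lemma Q_preconnected (ε a b : ℝ) (hε0 : 0 < ε) (hab : a ≤ b) (γ : ℝ → E2)
    (hγ : ContinuousOn γ (Set.Icc a b))
    (ξ : Set E2) (hξ : ξ = γ '' Set.Icc a b)
    (Q : Set E2) (hQ : Q = {x | ∃ y ∈ ξ, dist x y < ε}) :
    IsPreconnected Q := by
  have hγa : γ a ∈ ξ := hξ ▸ ⟨a, Set.mem_Icc.mpr ⟨le_refl a, hab⟩, rfl⟩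
  have hξpre : IsPreconnected ξ := hξ ▸ (isPreconnected_Icc.image γ hγ)
  have hQ' : Q = ⋃₀ ((fun p => ξ ∪ Metric.ball p ε) '' ξ) := by
    ext x
    rw [hQ]
    constructor
    · rintro ⟨p, hp, hd⟩
      exact ⟨ξ ∪ Metric.ball p ε, ⟨p, hp, rfl⟩, Or.inr (Metric.mem_ball.mpr hd)⟩
    · rintro ⟨t, ⟨p, hp, rfl⟩, hxt⟩
      rcases hxt with hxξ | hxb
      · exact ⟨x, hxξ, by simpa [dist_self] using hε0⟩
      · exact ⟨p, hp, Metric.mem_ball.mp hxb⟩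
  rw [hQ']
  apply isPreconnected_sUnion (γ a)
  · rintro t ⟨p, hp, rfl⟩
    exact Or.inl hγa
  · rintro t ⟨p, hp, rfl⟩
    exact IsPreconnected.union p hp (Metric.mem_ball_self hε0)
      hξpre (convex_ball p ε).isPreconnected

lemma reach_all (ε a b : ℝ) (hε0 : 0 < ε) (hε1 : ε < 1) (hab : a ≤ b) (γ : ℝ → E2)
    (hγ : ContinuousOn γ (Set.Icc a b))
    (ξ : Set E2) (hξ : ξ = γ '' Set.Icc a b) (hdiam : 2 ≤ Metric.diam ξ)
    (Q : Set E2) (hQ : Q = {x | ∃ y ∈ ξ, dist x y < ε}) :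
    ∀ x ∈ Q, x ∈ walkset Q (γ a) := by
  have hγa : γ a ∈ ξ := hξ ▸ ⟨a, Set.mem_Icc.mpr ⟨le_refl a, hab⟩, rfl⟩
  have hξQ : ξ ⊆ Q := by
    intro w hw; rw [hQ]; exact ⟨w, hw, by simpa [dist_self] using hε0⟩
  have hx₀Q : γ a ∈ Q := hξQ hγa
  set x₀ := γ a with hx₀def
  have Hc : ∀ x : E2, ∃ η : ℝ, 0 < η ∧ (x ∈ Q → ∀ x' ∈ Q, dist x' x < η →
      ∃ z₀ y z : E2, z₀ ∈ Q ∧ y ∈ Q ∧ z ∈ Q ∧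
        dist x z₀ = 1 ∧ dist z₀ y = 1 ∧ dist y z = 1 ∧ dist z x' = 1) := by
    intro x
    by_cases hx : x ∈ Q
    · obtain ⟨η, hp, hs⟩ := local4 ε a b hε0 hε1 γ hγ ξ hξ hdiam Q hQ x hx
      exact ⟨η, hp, fun _ => hs⟩
    · exact ⟨1, one_pos, fun h => absurd h hx⟩
  choose η hηpos hηspec using Hc
  intro x hxQ
  by_contra hxR
  set R := walkset Q x₀ with hRdef
  set U := ⋃ c ∈ R ∩ Q, Metric.ball c (η c) with hUdef
  set V := ⋃ c ∈ Q \ R, Metric.ball c (η c) with hVdef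
  have hUopen : IsOpen U := isOpen_biUnion fun c _ => Metric.isOpen_ball
  have hVopen : IsOpen V := isOpen_biUnion fun c _ => Metric.isOpen_ball
  have hQUV : Q ⊆ U ∪ V := by
    intro w hwQ
    by_cases hwR : w ∈ R
    · exact Or.inl (Set.mem_biUnion ⟨hwR, hwQ⟩ (Metric.mem_ball_self (hηpos w)))
    · exact Or.inr (Set.mem_biUnion ⟨hwQ, hwR⟩ (Metric.mem_ball_self (hηpos w)))
  have hQU : ∀ w ∈ Q ∩ U, w ∈ R := by
    rintro w ⟨hwQ, hwU⟩
    obtain ⟨c, hcRQ, hwball⟩ := Set.mem_iUnion₂.mp hwU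
    obtain ⟨z₀, y, z, hz₀Q, hyQ, hzQ, d1, d2, d3, d4⟩ :=
      hηspec c hcRQ.2 w hwQ (Metric.mem_ball.mp hwball)
    exact walk_extend Q x₀ c w z₀ y z hcRQ.1 hz₀Q hyQ hzQ hwQ d1 d2 d3 d4
  have hQVR : ∀ w ∈ Q ∩ V, w ∈ R → False := by
    rintro w ⟨hwQ, hwV⟩ hwR
    obtain ⟨c, hcQR, hwball⟩ := Set.mem_iUnion₂.mp hwV
    obtain ⟨z₀, y, z, hz₀Q, hyQ, hzQ, d1, d2, d3, d4⟩ :=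
      hηspec c hcQR.1 w hwQ (Metric.mem_ball.mp hwball)
    -- walk from c to w reversed: from w via z, y, z₀ to c
    have : c ∈ R := walk_extend Q x₀ w c z y z₀ hwR hzQ hyQ hz₀Q hcQR.1
      (by rw [dist_comm]; exact d4) (by rw [dist_comm]; exact d3)
      (by rw [dist_comm]; exact d2) (by rw [dist_comm]; exact d1)
    exact hcQR.2 this
  have hpre := Q_preconnected ε a b hε0 hab γ hγ ξ hξ Q hQ
  have hUne : (Q ∩ U).Nonempty := by
    refine ⟨x₀, hx₀Q, ?_⟩
    exact Set.mem_biUnion ⟨walkset_self Q x₀ hx₀Q, hx₀Q⟩ (Metric.mem_ball_self (hηpos x₀))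
  have hVne : (Q ∩ V).Nonempty := by
    refine ⟨x, hxQ, ?_⟩
    exact Set.mem_biUnion ⟨hxQ, hxR⟩ (Metric.mem_ball_self (hηpos x))
  obtain ⟨w, hwQ, hwU, hwV⟩ := hpre U V hUopen hVopen hQUV hUne hVne
  exact hQVR w ⟨hwQ, hwV⟩ (hQU w ⟨hwQ, hwU⟩)

lemma fin2_trans (u v w : Fin 2) (h1 : u ≠ v) (h2 : v ≠ w) : u = w := by
  fin_cases u <;> fin_cases v <;> fin_cases w <;> simp_all

/-- Let `ε ∈ (0,1)` and let `Q ⊆ ℝ²` be the open `ε`-neighborhood of a curve `ξ`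
(a continuous image of a closed interval) of diameter at least 2. Then the unit-distance
graph on `Q` contains an odd cycle (an odd closed walk with unit steps inside `Q`);
consequently no 2-coloring of `Q` avoids a monochromatic pair at distance 1. -/
theorem stmt17 (ε : ℝ) (hε0 : 0 < ε) (hε1 : ε < 1)
    (a b : ℝ) (hab : a ≤ b) (γ : ℝ → EuclideanSpace ℝ (Fin 2))
    (hγ : ContinuousOn γ (Set.Icc a b))
    (ξ : Set (EuclideanSpace ℝ (Fin 2))) (hξ : ξ = γ '' Set.Icc a b)
    (hdiam : 2 ≤ Metric.diam ξ)
    (Q : Set (EuclideanSpace ℝ (Fin 2))) (hQ : Q = {x | ∃ y ∈ ξ, dist x y < ε}) :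
    (∃ n : ℕ, Odd n ∧ ∃ f : ℕ → EuclideanSpace ℝ (Fin 2),
      (∀ i, f i ∈ Q) ∧ (∀ i < n, dist (f i) (f (i + 1)) = 1) ∧ f n = f 0) ∧
    (∀ c : Q → Fin 2, ∃ x y : Q,
      dist (x : EuclideanSpace ℝ (Fin 2)) (y : EuclideanSpace ℝ (Fin 2)) = 1 ∧
        c x = c y) := by
  have hγa : γ a ∈ ξ := hξ ▸ ⟨a, Set.mem_Icc.mpr ⟨le_refl a, hab⟩, rfl⟩
  have hξQ : ξ ⊆ Q := by
    intro w hw; rw [hQ]; exact ⟨w, hw, by simpa [dist_self] using hε0⟩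
  have hx₀Q : γ a ∈ Q := hξQ hγa
  obtain ⟨z₀, hz₀ξ, hxz₀⟩ := unit_nbr a b γ hγ ξ hξ hdiam (γ a) (γ a) hγa
    (by rw [dist_self]; norm_num)
  obtain ⟨m, f, hf0, hfm, hfQ, hfd⟩ :=
    reach_all ε a b hε0 hε1 hab γ hγ ξ hξ hdiam Q hQ z₀ (hξQ hz₀ξ)
  have hcycle : ∃ n : ℕ, Odd n ∧ ∃ f : ℕ → EuclideanSpace ℝ (Fin 2),
      (∀ i, f i ∈ Q) ∧ (∀ i < n, dist (f i) (f (i + 1)) = 1) ∧ f n = f 0 := by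
    refine ⟨2*m+1, ⟨m, by ring⟩, fun i => if i ≤ 2*m then f i else γ a, ?_, ?_, ?_⟩
    · intro i
      dsimp only
      split_ifs with h
      · exact hfQ i h
      · exact hx₀Q
    · intro i hi
      dsimp only
      by_cases hc : i < 2*m
      · rw [if_pos (by omega : i ≤ 2*m), if_pos (by omega : i+1 ≤ 2*m)]
        exact hfd i hc
      · have he : i = 2*m := by omega
        subst he
        rw [if_pos (le_refl _), if_neg (by omega), hfm, dist_comm]
        exact hxz₀
    · dsimp only
      rw [if_neg (by omega), if_pos (Nat.zero_le _), hf0]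
  refine ⟨hcycle, ?_⟩
  intro c
  by_contra hcon
  push_neg at hcon
  obtain ⟨n, hodd, F, hFQ, hFd, hFcyc⟩ := hcycle
  set g : ℕ → Fin 2 := fun i => c ⟨F i, hFQ i⟩ with hgdef
  have key : ∀ i, i ≤ n → (Even i → g i = g 0) ∧ (¬Even i → g i ≠ g 0) := by
    intro i
    induction i with
    | zero => exact fun _ => ⟨fun _ => rfl, fun h => absurd Even.zero h⟩
    | succ k ih =>
      intro hk
      have hk' : k ≤ n := by omega
      have hkn : k < n := by omega
      obtain ⟨ih1, ih2⟩ := ih hk'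
      have hne : g k ≠ g (k+1) :=
        hcon ⟨F k, hFQ k⟩ ⟨F (k+1), hFQ (k+1)⟩ (hFd k hkn)
      constructor
      · intro hev
        have hok : ¬ Even k := by rwa [Nat.even_add_one] at hev
        exact fin2_trans _ _ _ (Ne.symm hne) (ih2 hok)
      · intro hodd'
        have hek : Even k := by rwa [Nat.even_add_one, not_not] at hodd'
        have heq := ih1 hek
        intro hcontra
        exact hne (heq.trans hcontra.symm)
  have hnn : ¬ Even n := Nat.not_even_iff_odd.mpr hodd
  have h1 := (key n le_rfl).2 hnn
  have h2 : g n = g 0 := by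
    have he : (⟨F n, hFQ n⟩ : Q) = ⟨F 0, hFQ 0⟩ := Subtype.ext hFcyc
    simpa [hgdef] using congrArg c he
  exact h1 h2
end
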